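/- arXiv:2601.17433 — 3 statements merged into one kernel-verified Lean document; each statement's English description precedes it below -/
import Mathlib

section
/- For M ∈ ℂ \ {0, 1, −1} and λ ∈ ℂ with λ̃ = λ + z²: f_{α−1}(M⁻¹,λ̃) = f_{α−1}(M,λ̃), i.e., Σ_{k=0}^{(α−1)/2} c̃_{2k}^{α−1}(M⁻¹,ε)·λ̃ᵏ = Σ_{k=0}^{(α−1)/2} c̃_{2k}^{α−1}(M,ε)·λ̃ᵏ. -/
abbrev Mat := Matrix (Fin 2) (Fin 2) ℂ

/-- Admissibility of a tuple `i : Fin k → ℕ`: strictly increasing, values in `[1, n]`,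
and the `j`-th entry (0-based) has parity `(j + start) % 2`.  `start = 1` gives the
"odd-start admissible" tuples (`i_j` odd for odd 1-based positions `j`), while
`start = 0` gives the "even-start admissible" tuples. -/
def Adm (n k start : ℕ) (i : Fin k → ℕ) : Prop :=
  (∀ j j' : Fin k, j < j' → i j < i j') ∧
  (∀ j : Fin k, 1 ≤ i j ∧ i j ≤ n) ∧
  (∀ j : Fin k, i j % 2 = (j.val + start) % 2)

instance (n k start : ℕ) : DecidablePred (Adm n k start) := fun _ => by
  unfold Adm; infer_instance

/-- `ĥ(i₁,…,i_k)`: the signed sum of the `ε_t`, `1 ≤ t ≤ n`, omitting the `t` lying in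
the tuple, where `ε_t` gets the sign `(−1)^{#{j : i_j < t}}`; this agrees with
`(ε₁+⋯+ε_{i₁−1}) − (ε_{i₁+1}+⋯+ε_{i₂−1}) + ⋯ + (−1)^k (ε_{i_k+1}+⋯+ε_n)`. -/
def hatSum (n : ℕ) (ε : ℕ → ℤ) {k : ℕ} (i : Fin k → ℕ) : ℤ :=
  ∑ t ∈ Finset.Icc 1 n,
    if ∃ j, i j = t then 0
    else (-1) ^ (Finset.univ.filter fun j : Fin k => i j < t).card * ε t

/-- `ĥᵃˡᵗ(i₁,…,i_k)`: the alternating sum (signs −,+,−,+,… in increasing order)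
of the `ε_t`, `1 ≤ t ≤ n`, with `t` not in the tuple. -/
def hatAltSum (n : ℕ) (ε : ℕ → ℤ) {k : ℕ} (i : Fin k → ℕ) : ℤ :=
  ∑ t ∈ Finset.Icc 1 n,
    if ∃ j, i j = t then 0
    else (-1) ^ ((Finset.Icc 1 t).filter fun s => ¬∃ j, i j = s).card * ε t

/-- `c_k^n(M, ε) = Σ ε_{i₁}⋯ε_{i_k}·M^{ĥ(i₁,…,i_k)}` over odd-start admissible tuples.
For `k = 0` this is `M^{ε₁+⋯+ε_n}`, and it vanishes for `k > n`. -/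
noncomputable def cP (n k : ℕ) (ε : ℕ → ℤ) (M : ℂ) : ℂ :=
  ∑ i : Fin k → Fin (n + 1),
    if Adm n k 1 (fun j => (i j : ℕ))
    then (∏ j : Fin k, (ε (i j : ℕ) : ℂ)) * M ^ hatSum n ε (fun j => (i j : ℕ))
    else 0

/-- `d_k^n(M, ε) = Σ ε_{i₁}⋯ε_{i_k}·M^{−ĥ(i₁,…,i_k)}` over even-start admissible tuples.
For `k = 0` this is `M^{−(ε₁+⋯+ε_n)}`, and it vanishes for `k > n`. -/
noncomputable def dP (n k : ℕ) (ε : ℕ → ℤ) (M : ℂ) : ℂ :=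
  ∑ i : Fin k → Fin (n + 1),
    if Adm n k 0 (fun j => (i j : ℕ))
    then (∏ j : Fin k, (ε (i j : ℕ) : ℂ)) * M ^ (-hatSum n ε (fun j => (i j : ℕ)))
    else 0

/-- `c̃_k^n(M, ε) = Σ ε_{i₁}⋯ε_{i_k}·M^{ĥᵃˡᵗ(i₁,…,i_k)}` over odd-start admissible
tuples.  For `k = 0` this is `M^{−ε₁+ε₂−⋯+(−1)ⁿ εₙ}`, it equals `1` for `k = n = 0`,
and it vanishes for `k > n`. -/
noncomputable def cT (n k : ℕ) (ε : ℕ → ℤ) (M : ℂ) : ℂ :=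
  ∑ i : Fin k → Fin (n + 1),
    if Adm n k 1 (fun j => (i j : ℕ))
    then (∏ j : Fin k, (ε (i j : ℕ) : ℂ)) * M ^ hatAltSum n ε (fun j => (i j : ℕ))
    else 0

/-- `d̃_k^n(M, ε) = Σ ε_{i₁}⋯ε_{i_k}·M^{−ĥᵃˡᵗ(i₁,…,i_k)}` over even-start admissible
tuples. -/
noncomputable def dT (n k : ℕ) (ε : ℕ → ℤ) (M : ℂ) : ℂ :=
  ∑ i : Fin k → Fin (n + 1),
    if Adm n k 0 (fun j => (i j : ℕ))
    then (∏ j : Fin k, (ε (i j : ℕ) : ℂ)) * M ^ (-hatAltSum n ε (fun j => (i j : ℕ)))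
    else 0

namespace FSym

def rf (n : ℕ) (a : Fin (n+1)) : Fin (n+1) :=
  if h : a.val = 0 then a else ⟨n + 1 - a.val, by omega⟩

lemma rf_val {n : ℕ} (a : Fin (n+1)) (h : 1 ≤ a.val) : (rf n a).val = n + 1 - a.val := by
  unfold rf; rw [dif_neg (by omega)]

lemma rf_invol (n : ℕ) : Function.Involutive (rf n) := by
  intro a
  rcases a with ⟨v, hv⟩
  by_cases h : v = 0
  · simp [rf, h]
  · have hv1 : 1 ≤ ((⟨v, hv⟩ : Fin (n+1)) : ℕ) := Nat.one_le_iff_ne_zero.mpr h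
    have h1 : (rf n ⟨v, hv⟩).val = n + 1 - v := rf_val _ hv1
    have h2 : 1 ≤ (rf n (⟨v, hv⟩ : Fin (n+1))).val := by omega
    apply Fin.ext
    rw [rf_val _ h2, h1]
    simp only []
    omega

def σf {n k : ℕ} (i : Fin k → Fin (n+1)) : Fin k → Fin (n+1) :=
  fun j => rf n (i j.rev)

lemma σf_invol {n k : ℕ} : Function.Involutive (σf (n := n) (k := k)) := by
  intro i
  funext j
  simp [σf, Fin.rev_rev, rf_invol n _]

lemma adm_σf {n k : ℕ} (hn : n % 2 = 0) (hk : k % 2 = 0) {i : Fin k → Fin (n+1)}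
    (h : Adm n k 1 fun j => (i j).val) : Adm n k 1 fun j => ((σf i) j).val := by
  obtain ⟨hmono, hbd, hpar⟩ := h
  have hval : ∀ j : Fin k, ((σf i) j).val = n + 1 - (i j.rev).val := fun j =>
    rf_val _ (hbd j.rev).1
  refine ⟨?_, ?_, ?_⟩
  · intro j j' hjj
    have hjj' : j.val < j'.val := hjj
    show ((σf i) j).val < ((σf i) j').val
    simp only [hval]
    have h1 : (i j.rev).val ≤ n := (hbd j.rev).2
    have h2 : 1 ≤ (i j'.rev).val := (hbd j'.rev).1
    have h3 : (i j'.rev).val < (i j.rev).val := hmono j'.rev j.rev (by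
      rw [Fin.lt_def, Fin.val_rev, Fin.val_rev]; omega)
    omega
  · intro j
    show 1 ≤ ((σf i) j).val ∧ ((σf i) j).val ≤ n
    simp only [hval]
    have h1 : 1 ≤ (i j.rev).val ∧ (i j.rev).val ≤ n := hbd j.rev
    omega
  · intro j
    show ((σf i) j).val % 2 = (j.val + 1) % 2
    simp only [hval]
    have h1 : (i j.rev).val % 2 = (j.rev.val + 1) % 2 := hpar j.rev
    have h2 : 1 ≤ (i j.rev).val ∧ (i j.rev).val ≤ n := hbd j.rev
    rw [Fin.val_rev] at h1
    have hj := j.isLt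
    omega

lemma exists_σf {n k : ℕ} {i : Fin k → Fin (n+1)}
    (hbd : ∀ j : Fin k, 1 ≤ (i j).val ∧ (i j).val ≤ n)
    {t : ℕ} (ht1 : 1 ≤ t) (ht2 : t ≤ n) :
    (∃ j, ((σf i) j).val = t) ↔ (∃ j, (i j).val = n + 1 - t) := by
  constructor
  · rintro ⟨j, hj⟩
    refine ⟨j.rev, ?_⟩
    simp only [σf] at hj
    rw [rf_val _ (hbd j.rev).1] at hj
    have := hbd j.rev
    omega
  · rintro ⟨j, hj⟩
    refine ⟨j.rev, ?_⟩
    show (rf n (i j.rev.rev)).val = t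
    rw [Fin.rev_rev, rf_val _ (hbd j).1]
    have := hbd j
    omega

lemma card_compl {n k : ℕ} {i : Fin k → Fin (n+1)} (h : Adm n k 1 fun j => (i j).val) :
    ((Finset.Ioc 0 n).filter fun s => ¬∃ j, (i j).val = s).card + k = n := by
  obtain ⟨hmono, hbd, -⟩ := h
  have hinj : Function.Injective fun j : Fin k => (i j).val := by
    intro a b hab
    rcases lt_trichotomy a b with hl | hl | hl
    · exact absurd hab (Nat.ne_of_lt (hmono a b hl))
    · exact hl
    · exact absurd hab.symm (Nat.ne_of_lt (hmono b a hl))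
  have himg : (Finset.Ioc 0 n).filter (fun s => ∃ j, (i j).val = s)
      = Finset.image (fun j : Fin k => (i j).val) Finset.univ := by
    ext s
    simp only [Finset.mem_filter, Finset.mem_Ioc, Finset.mem_image, Finset.mem_univ, true_and]
    constructor
    · rintro ⟨-, j, rfl⟩; exact ⟨j, rfl⟩
    · rintro ⟨j, rfl⟩
      exact ⟨⟨(hbd j).1, (hbd j).2⟩, j, rfl⟩
  have hfull := Finset.card_filter_add_card_filter_not
    (s := Finset.Ioc 0 n) (fun s => ∃ j, (i j).val = s)
  rw [himg, Finset.card_image_of_injective _ hinj, Finset.card_univ, Fintype.card_fin,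
    Nat.card_Ioc] at hfull
  omega

lemma hatAlt_σf {n k : ℕ} (hn : n % 2 = 0) (hk : k % 2 = 0) (ε : ℕ → ℤ)
    (hsym : ∀ t, 1 ≤ t → t ≤ n → ε t = ε (n + 1 - t))
    {i : Fin k → Fin (n+1)} (h : Adm n k 1 fun j => (i j).val) :
    hatAltSum n ε (fun j => ((σf i) j).val) = -hatAltSum n ε fun j => (i j).val := by
  have hbd := h.2.1
  have hIoc : ∀ x : ℕ, Finset.Icc 1 x = Finset.Ioc 0 x := by
    intro x; ext s; simp [Finset.mem_Icc, Finset.mem_Ioc]; omega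
  unfold hatAltSum
  simp only [hIoc]
  rw [← Finset.sum_neg_distrib]
  apply Finset.sum_nbij' (fun t => n + 1 - t) (fun t => n + 1 - t)
  · intro t ht; simp only [Finset.mem_Ioc] at *; omega
  · intro t ht; simp only [Finset.mem_Ioc] at *; omega
  · intro t ht; simp only [Finset.mem_Ioc] at ht; omega
  · intro t ht; simp only [Finset.mem_Ioc] at ht; omega
  · intro t ht
    simp only [Finset.mem_Ioc] at ht
    have hmem : (∃ j, ((σf i) j).val = t) ↔ (∃ j, (i j).val = n + 1 - t) :=
      exists_σf hbd ht.1 ht.2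
    by_cases hc : ∃ j, (i j).val = n + 1 - t
    · rw [if_pos (hmem.mpr hc), if_pos hc, neg_zero]
    · rw [if_neg (fun hq => hc (hmem.mp hq)), if_neg hc]
      set t' := n + 1 - t with ht'
      -- cardinalities
      set X := ((Finset.Ioc t' n).filter fun s => ¬∃ j, (i j).val = s).card with hX
      have hC' : ((Finset.Ioc 0 t).filter fun s => ¬∃ j, ((σf i) j).val = s).card
          = ((Finset.Icc t' n).filter fun s => ¬∃ j, (i j).val = s).card := by
        apply Finset.card_nbij' (fun s => n + 1 - s) (fun s => n + 1 - s)
        · intro s hs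
          simp only [Finset.mem_coe, Finset.mem_filter, Finset.mem_Ioc, Finset.mem_Icc] at *
          refine ⟨⟨by omega, by omega⟩, ?_⟩
          intro hex
          exact hs.2 ((exists_σf hbd (t := s) (by omega) (by omega)).mpr hex)
        · intro u hu
          simp only [Finset.mem_coe, Finset.mem_filter, Finset.mem_Ioc, Finset.mem_Icc] at *
          refine ⟨⟨by omega, by omega⟩, ?_⟩
          intro hex
          exact hu.2 (by
            have := (exists_σf hbd (t := n + 1 - u) (by omega) (by omega)).mp hex
            rwa [show n + 1 - (n + 1 - u) = u from by omega] at this)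
        · intro s hs; simp only [Finset.mem_coe, Finset.mem_filter, Finset.mem_Ioc] at hs; beta_reduce; omega
        · intro u hu; simp only [Finset.mem_coe, Finset.mem_filter, Finset.mem_Icc] at hu; beta_reduce; omega
      have hins : ((Finset.Icc t' n).filter fun s => ¬∃ j, (i j).val = s).card
          = X + 1 := by
        rw [← Finset.Ioc_insert_left (show t' ≤ n from by omega), Finset.filter_insert,
          if_pos hc, Finset.card_insert_of_notMem (by
            simp only [Finset.mem_filter, Finset.mem_Ioc]
            intro hmem'
            exact absurd hmem'.1.1 (lt_irrefl t'))]
      have hsplit : ((Finset.Ioc 0 t').filter fun s => ¬∃ j, (i j).val = s).card + X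
          = ((Finset.Ioc 0 n).filter fun s => ¬∃ j, (i j).val = s).card := by
        rw [hX, Finset.card_filter, Finset.card_filter, Finset.card_filter]
        exact Finset.sum_Ioc_consecutive _ (by omega) (by omega)
      have hfull := card_compl h
      set C := ((Finset.Ioc 0 t').filter fun s => ¬∃ j, (i j).val = s).card with hC
      have e1 : ((Finset.Ioc 0 t).filter fun s => ¬∃ j, ((σf i) j).val = s).card
          = X + 1 := by rw [hC', hins]
      -- sign
      have hε : ε t = ε t' := by rw [ht']; exact hsym t ht.1 ht.2
      have hsign : (-1 : ℤ) ^ ((Finset.Ioc 0 t).filter fun s => ¬∃ j, ((σf i) j).val = s).card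
          = -(-1 : ℤ) ^ C := by
        rw [e1, pow_add, pow_one]
        have hpar : X % 2 = C % 2 := by omega
        rcases Nat.even_or_odd C with hCe | hCo
        · have hXe : Even X := by rw [Nat.even_iff] at *; omega
          rw [hXe.neg_one_pow, hCe.neg_one_pow]; ring
        · have hXo : Odd X := by rw [Nat.odd_iff] at *; omega
          rw [hXo.neg_one_pow, hCo.neg_one_pow]; ring
      rw [hsign, hε]
      ring

lemma prod_σf {n k : ℕ} (ε : ℕ → ℤ)
    (hsym : ∀ t, 1 ≤ t → t ≤ n → ε t = ε (n + 1 - t))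
    {i : Fin k → Fin (n+1)} (hbd : ∀ j : Fin k, 1 ≤ (i j).val ∧ (i j).val ≤ n) :
    (∏ j : Fin k, (ε ((σf i) j).val : ℂ)) = ∏ j : Fin k, (ε (i j).val : ℂ) := by
  refine Fintype.prod_bijective Fin.rev Fin.rev_involutive.bijective _ _ fun j => ?_
  have h1 := hbd j.rev
  rw [show ((σf i) j).val = n + 1 - (i j.rev).val from rf_val _ h1.1, ← hsym _ h1.1 h1.2]

lemma cT_inv {n k : ℕ} (hn : n % 2 = 0) (hk : k % 2 = 0) (ε : ℕ → ℤ)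
    (hsym : ∀ t, 1 ≤ t → t ≤ n → ε t = ε (n + 1 - t)) (M : ℂ) :
    cT n k ε M⁻¹ = cT n k ε M := by
  unfold cT
  apply Fintype.sum_bijective σf σf_invol.bijective
  intro i
  by_cases hadm : Adm n k 1 fun j => (i j).val
  · rw [if_pos hadm, if_pos (adm_σf hn hk hadm), prod_σf ε hsym hadm.2.1,
      hatAlt_σf hn hk ε hsym hadm, zpow_neg, ← inv_zpow]
  · rw [if_neg hadm, if_neg]
    intro hadm2
    apply hadm
    have h2 := adm_σf hn hk hadm2
    rwa [show (fun j => ((σf (σf i)) j).val) = fun j => (i j).val from by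
      rw [σf_invol i]] at h2

end FSym

/-- For a symmetric `ε`-sequence, `f_{α−1}(M⁻¹,λ̃) = f_{α−1}(M,λ̃)`,
i.e. `Σ_{k=0}^{(α−1)/2} c̃_{2k}^{α−1}(M⁻¹,ε)·λ̃ᵏ = Σ_{k=0}^{(α−1)/2} c̃_{2k}^{α−1}(M,ε)·λ̃ᵏ`. -/
theorem f_symmetric (M : ℂ) (hM0 : M ≠ 0) (hM1 : M ≠ 1) (hMneg1 : M ≠ -1)
    (lam : ℂ) (α : ℕ) (hodd : Odd α) (hα : 3 ≤ α) (ε : ℕ → ℤ)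
    (hε : ∀ i, 1 ≤ i → i ≤ α - 1 → ε i = 1 ∨ ε i = -1)
    (hsym : ∀ i, 1 ≤ i → i ≤ α - 1 → ε i = ε (α - i))
    (lamT : ℂ) (hlamT : lamT = lam + (M - M⁻¹) ^ 2) :
    ∑ k ∈ Finset.range ((α - 1) / 2 + 1), cT (α - 1) (2 * k) ε M⁻¹ * lamT ^ k =
      ∑ k ∈ Finset.range ((α - 1) / 2 + 1), cT (α - 1) (2 * k) ε M * lamT ^ k := by
  have hn : (α - 1) % 2 = 0 := by rcases hodd with ⟨m, hm⟩; omega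
  have hsym2 : ∀ t, 1 ≤ t → t ≤ α - 1 → ε t = ε (α - 1 + 1 - t) := by
    intro t h1 h2
    rw [show α - 1 + 1 - t = α - t from by omega]
    exact hsym t h1 h2
  refine Finset.sum_congr rfl fun k _ => ?_
  rw [FSym.cT_inv hn (by omega) ε hsym2]
end

section
/- Write f = f_{α−1}(M,λ̃), g = g_{α−1}(M,λ̃) and ḡ = g_{α−1}(M⁻¹,λ̃). Then z·(1 − f² + λ̃·g·ḡ) = λ̃·f·(g − ḡ). In particular, if f = 0 then −λ̃·g·ḡ = 1. -/
section Chunk1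
open Finset

lemma fin_exists_split {k : ℕ} (P : Fin (k+1) → Prop) :
    (∃ j, P j) ↔ (∃ j : Fin k, P j.castSucc) ∨ P (Fin.last k) := by
  constructor
  · rintro ⟨j, hj⟩
    rcases Fin.eq_castSucc_or_eq_last j with ⟨j', rfl⟩ | rfl
    · exact Or.inl ⟨j', hj⟩
    · exact Or.inr hj
  · rintro (⟨j, hj⟩ | h)
    exacts [⟨j.castSucc, hj⟩, ⟨Fin.last k, h⟩]

lemma adm_lb {n k : ℕ} {i : Fin k → ℕ} (h : Adm n k 1 i) :
    ∀ j : Fin k, j.val + 1 ≤ i j := by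
  obtain ⟨hmono, hbd, -⟩ := h
  have key : ∀ m (hm : m < k), m + 1 ≤ i ⟨m, hm⟩ := by
    intro m
    induction m with
    | zero => intro hm; exact (hbd ⟨0, hm⟩).1
    | succ m ih =>
      intro hm
      have hm' : m < k := Nat.lt_of_succ_lt hm
      have h1 := hmono ⟨m, hm'⟩ ⟨m+1, hm⟩ (by simp [Fin.lt_def])
      have h2 := ih hm'
      omega
  intro j; simpa using key j.val j.isLt

lemma adm_k_le {n k : ℕ} {i : Fin k → ℕ} (h : Adm n k 1 i) : k ≤ n := by
  rcases Nat.eq_zero_or_pos k with rfl | hk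
  · exact Nat.zero_le n
  · have h1 := adm_lb h ⟨k-1, by omega⟩
    have h2 := (h.2.1 ⟨k-1, by omega⟩).2
    simp only at h1
    omega

lemma cT_eq_zero {n k : ℕ} (ε : ℕ → ℤ) (M : ℂ) (h : n < k) : cT n k ε M = 0 := by
  unfold cT
  apply Finset.sum_eq_zero
  intro i _
  rw [if_neg]
  intro hadm
  exact absurd (adm_k_le hadm) (by omega)

lemma sum_snoc_split {β : Type*} [AddCommMonoid β] {k m : ℕ}
    (F : (Fin (k+1) → Fin m) → β) :
    ∑ i : Fin (k+1) → Fin m, F i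
      = ∑ x : Fin m, ∑ f : Fin k → Fin m, F (Fin.snoc f x) := by
  calc ∑ i : Fin (k+1) → Fin m, F i
      = ∑ p : Fin m × (Fin k → Fin m), F (Fin.snoc p.2 p.1) :=
        (Fintype.sum_equiv (Fin.snocEquiv (fun _ => Fin m)) _ _ (fun p => rfl)).symm
    _ = ∑ x : Fin m, ∑ f : Fin k → Fin m, F (Fin.snoc f x) := Fintype.sum_prod_type _

/-- restrict a sum over functions into `Fin (m+1)` to functions avoiding `last`. -/
lemma sum_avoid_last {β : Type*} [AddCommMonoid β] {k m : ℕ}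
    (G : (Fin k → Fin (m+1)) → β)
    (hG : ∀ f, (∃ j, f j = Fin.last m) → G f = 0) :
    ∑ f : Fin k → Fin (m+1), G f
      = ∑ f' : Fin k → Fin m, G (fun j => (f' j).castSucc) := by
  classical
  have hinj : ∀ a ∈ (Finset.univ : Finset (Fin k → Fin m)), ∀ b ∈ Finset.univ,
      (fun (f' : Fin k → Fin m) (j : Fin k) => (f' j).castSucc) a
        = (fun (f' : Fin k → Fin m) (j : Fin k) => (f' j).castSucc) b → a = b := by
    intro a _ b _ hab
    funext j
    exact Fin.castSucc_injective _ (congrFun hab j)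
  have h1 : ∑ f ∈ Finset.univ.image (fun (f' : Fin k → Fin m) (j : Fin k) => (f' j).castSucc),
      G f = ∑ f' : Fin k → Fin m, G (fun j => (f' j).castSucc) := Finset.sum_image hinj
  rw [← h1]
  symm
  apply Finset.sum_subset (Finset.subset_univ _)
  intro f _ hf
  apply hG
  by_contra hno
  push_neg at hno
  apply hf
  simp only [Finset.mem_image, Finset.mem_univ, true_and]
  refine ⟨fun j => (f j).castPred (hno j), ?_⟩
  funext j
  simp

end Chunk1

section Chunk2
open Finset

lemma snoc_val {m k : ℕ} (f : Fin k → Fin m) (x : Fin m) :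
    (fun j => ((Fin.snoc f x : Fin (k+1) → Fin m) j : ℕ))
      = Fin.snoc (fun t => ((f t : ℕ))) (x : ℕ) := by
  funext j
  refine Fin.lastCases ?_ ?_ j <;> simp

lemma adm_inj {n k : ℕ} {v : Fin k → ℕ} (h : Adm n k 1 v) : Function.Injective v := by
  intro a b hab
  by_contra hne
  rcases lt_or_gt_of_ne (fun he => hne he) with hl | hl
  · exact absurd hab (Nat.ne_of_lt (h.1 a b hl))
  · exact absurd hab.symm (Nat.ne_of_lt (h.1 b a hl))

lemma adm_iff_succ {n k : ℕ} (v : Fin k → ℕ) (hv : ∀ j, v j ≤ n) :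
    Adm (n+1) k 1 v ↔ Adm n k 1 v := by
  constructor
  · rintro ⟨h1, h2, h3⟩
    exact ⟨h1, fun j => ⟨(h2 j).1, hv j⟩, h3⟩
  · rintro ⟨h1, h2, h3⟩
    exact ⟨h1, fun j => ⟨(h2 j).1, le_trans (h2 j).2 (Nat.le_succ n)⟩, h3⟩

lemma adm_snoc_top {n k : ℕ} (v : Fin k → ℕ) (hv : ∀ j, v j ≤ n) :
    Adm (n+1) (k+1) 1 (Fin.snoc (α := fun _ => ℕ) v (n+1)) ↔ (Adm n k 1 v ∧ (n+1) % 2 = (k+1) % 2) := by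
  constructor
  · rintro ⟨h1, h2, h3⟩
    refine ⟨⟨?_, ?_, ?_⟩, ?_⟩
    · intro j j' hjj'
      have := h1 j.castSucc j'.castSucc (Fin.castSucc_lt_castSucc_iff.mpr hjj')
      simpa using this
    · intro j
      refine ⟨?_, hv j⟩
      have := (h2 j.castSucc).1
      simpa using this
    · intro j
      have := h3 j.castSucc
      simpa using this
    · have := h3 (Fin.last k)
      simpa using this
  · rintro ⟨⟨h1, h2, h3⟩, hpar⟩
    refine ⟨?_, ?_, ?_⟩
    · intro j j' hjj'
      rcases Fin.eq_castSucc_or_eq_last j' with ⟨j₂, rfl⟩ | rfl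
      · rcases Fin.eq_castSucc_or_eq_last j with ⟨j₁, rfl⟩ | rfl
        · simp only [Fin.snoc_castSucc]
          exact h1 j₁ j₂ (Fin.castSucc_lt_castSucc_iff.mp hjj')
        · exact absurd (lt_trans hjj' (Fin.castSucc_lt_last j₂)) (lt_irrefl _)
      · rcases Fin.eq_castSucc_or_eq_last j with ⟨j₁, rfl⟩ | rfl
        · simp only [Fin.snoc_castSucc, Fin.snoc_last]
          have := (h2 j₁).2; omega
        · exact absurd hjj' (lt_irrefl _)
    · intro j
      rcases Fin.eq_castSucc_or_eq_last j with ⟨j₁, rfl⟩ | rfl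
      · simp only [Fin.snoc_castSucc]
        exact ⟨(h2 j₁).1, le_trans (h2 j₁).2 (Nat.le_succ n)⟩
      · simp only [Fin.snoc_last]
        omega
    · intro j
      rcases Fin.eq_castSucc_or_eq_last j with ⟨j₁, rfl⟩ | rfl
      · simpa using h3 j₁
      · simpa using hpar

lemma exists_snoc_iff {n k : ℕ} (v : Fin k → ℕ) (hv : ∀ j, v j ≤ n) {s : ℕ} (hs : s ≤ n) :
    (∃ j : Fin (k+1), Fin.snoc (α := fun _ => ℕ) v (n+1) j = s) ↔ ∃ j : Fin k, v j = s := by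
  rw [fin_exists_split]
  simp only [Fin.snoc_castSucc, Fin.snoc_last]
  constructor
  · rintro (h | h)
    · exact h
    · omega
  · exact Or.inl

lemma hatAltSum_snoc_top {n k : ℕ} (ε : ℕ → ℤ) (v : Fin k → ℕ) (hv : ∀ j, v j ≤ n) :
    hatAltSum (n+1) ε (Fin.snoc (α := fun _ => ℕ) v (n+1)) = hatAltSum n ε v := by
  unfold hatAltSum
  rw [← Finset.insert_Icc_right_eq_Icc_add_one (by omega : 1 ≤ n + 1),
    Finset.sum_insert (by simp)]
  rw [if_pos ⟨Fin.last k, by simp⟩, zero_add]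
  apply Finset.sum_congr rfl
  intro t ht
  rw [Finset.mem_Icc] at ht
  have he : ∀ s, s ≤ n → ((∃ j : Fin (k+1), Fin.snoc (α := fun _ => ℕ) v (n+1) j = s) ↔ ∃ j : Fin k, v j = s) :=
    fun s hs => exists_snoc_iff v hv hs
  rw [if_congr (he t ht.2) rfl rfl]
  by_cases hex : ∃ j : Fin k, v j = t
  · simp [hex]
  · rw [if_neg hex, if_neg hex]
    congr 2
    apply congrArg Finset.card
    apply Finset.filter_congr
    intro s hs
    rw [Finset.mem_Icc] at hs
    simp only [he s (le_trans hs.2 ht.2)]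

lemma hatAltSum_succ_top' {n k : ℕ} (ε : ℕ → ℤ) (v : Fin k → ℕ) (hadm : Adm n k 1 v) :
    hatAltSum (n+1) ε v = hatAltSum n ε v + (-1:ℤ)^(n+1+k) * ε (n+1) := by
  have hkn : k ≤ n := adm_k_le hadm
  unfold hatAltSum
  rw [← Finset.insert_Icc_right_eq_Icc_add_one (by omega : 1 ≤ n + 1),
    Finset.sum_insert (by simp)]
  rw [if_neg (by rintro ⟨j, hj⟩; have := (hadm.2.1 j).2; omega)]
  rw [add_comm]
  congr 1
  have himg : (Finset.Icc 1 (n+1)).filter (fun s => ∃ j, v j = s)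
      = Finset.image v Finset.univ := by
    ext s
    simp only [Finset.mem_filter, Finset.mem_Icc, Finset.mem_image, Finset.mem_univ, true_and]
    constructor
    · rintro ⟨-, j, hj⟩; exact ⟨j, hj⟩
    · rintro ⟨j, rfl⟩
      exact ⟨⟨(hadm.2.1 j).1, le_trans (hadm.2.1 j).2 (Nat.le_succ n)⟩, ⟨j, rfl⟩⟩
  have hcard1 : ((Finset.Icc 1 (n+1)).filter (fun s => ∃ j, v j = s)).card = k := by
    rw [himg, Finset.card_image_of_injective _ (adm_inj hadm)]
    simp
  have hcard : ((Finset.Icc 1 (n+1)).filter (fun s => ¬∃ j, v j = s)).card = n + 1 - k := by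
    have := Finset.card_filter_add_card_filter_not
      (s := Finset.Icc 1 (n+1)) (p := fun s => ∃ j, v j = s)
    rw [hcard1, Nat.card_Icc] at this
    omega
  rw [hcard]
  have hpow : ((-1:ℤ))^(n+1-k) = (-1:ℤ)^(n+1+k) := by
    have h2 : n+1+k = (n+1-k) + 2*k := by omega
    rw [h2, pow_add, pow_mul, neg_one_sq, one_pow, mul_one]
  rw [hpow]

end Chunk2

section Chunk3
open Finset

noncomputable def cTs (n k : ℕ) (ε : ℕ → ℤ) (M : ℂ) (i : Fin k → Fin (n+1)) : ℂ :=
  if Adm n k 1 (fun j => (i j : ℕ))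
  then (∏ j : Fin k, (ε (i j : ℕ) : ℂ)) * M ^ hatAltSum n ε (fun j => (i j : ℕ))
  else 0

lemma cT_eq_sum (n k : ℕ) (ε : ℕ → ℤ) (M : ℂ) :
    cT n k ε M = ∑ i : Fin k → Fin (n+1), cTs n k ε M i := rfl

lemma hatAltSum_nil (n : ℕ) (ε : ℕ → ℤ) (i : Fin 0 → ℕ) :
    hatAltSum n ε i = ∑ t ∈ Finset.Icc 1 n, (-1:ℤ)^t * ε t := by
  unfold hatAltSum
  apply Finset.sum_congr rfl
  intro t ht
  rw [Finset.mem_Icc] at ht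
  rw [if_neg (by rintro ⟨j, -⟩; exact j.elim0)]
  congr 2
  have : (Finset.Icc 1 t).filter (fun s => ¬∃ j : Fin 0, i j = s) = Finset.Icc 1 t := by
    apply Finset.filter_true_of_mem
    intro s _
    rintro ⟨j, -⟩; exact j.elim0
  rw [this, Nat.card_Icc]
  omega

lemma cT_zero_eq (n : ℕ) (ε : ℕ → ℤ) (M : ℂ) :
    cT n 0 ε M = M ^ (∑ t ∈ Finset.Icc 1 n, (-1:ℤ)^t * ε t) := by
  rw [cT_eq_sum]
  rw [Fintype.sum_unique]
  unfold cTs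
  rw [if_pos ⟨fun j => j.elim0, fun j => j.elim0, fun j => j.elim0⟩]
  rw [Fin.prod_univ_zero, one_mul, hatAltSum_nil]

lemma cT_nil_succ (n : ℕ) (ε : ℕ → ℤ) (M : ℂ) (hM : M ≠ 0) :
    cT (n+1) 0 ε M = M ^ ((-1:ℤ)^(n+1) * ε (n+1)) * cT n 0 ε M := by
  rw [cT_zero_eq, cT_zero_eq]
  rw [← Finset.insert_Icc_right_eq_Icc_add_one (by omega : 1 ≤ n + 1),
    Finset.sum_insert (by simp), zpow_add₀ hM]

lemma cT_succ_succ (n k : ℕ) (ε : ℕ → ℤ) (M : ℂ) (hM : M ≠ 0) :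
    cT (n+1) (k+1) ε M
      = M ^ ((-1:ℤ)^(n+k) * ε (n+1)) * cT n (k+1) ε M
        + (if (n+1) % 2 = (k+1) % 2 then (ε (n+1) : ℂ) * cT n k ε M else 0) := by
  classical
  set C : ℂ := M ^ ((-1:ℤ)^(n+k) * ε (n+1)) with hC
  rw [cT_eq_sum (n+1) (k+1) ε M,
    sum_snoc_split (cTs (n+1) (k+1) ε M), Fin.sum_univ_castSucc]
  have hzero : ∀ (x : Fin (n+2)) (f : Fin k → Fin (n+2)),
      (∃ j, f j = Fin.last (n+1)) → cTs (n+1) (k+1) ε M (Fin.snoc f x) = 0 := by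
    rintro x f ⟨j, hj⟩
    apply if_neg
    intro hadm
    have h1 := hadm.1 j.castSucc (Fin.last k) (Fin.castSucc_lt_last j)
    have h2 := (hadm.2.1 (Fin.last k)).2
    simp only [Fin.snoc_castSucc, Fin.snoc_last, hj, Fin.val_last] at h1 h2
    omega
  have hT2 : ∑ f : Fin k → Fin (n+2), cTs (n+1) (k+1) ε M (Fin.snoc f (Fin.last (n+1)))
      = (if (n+1) % 2 = (k+1) % 2 then (ε (n+1) : ℂ) * cT n k ε M else 0) := by
    rw [sum_avoid_last (fun f => cTs (n+1) (k+1) ε M (Fin.snoc f (Fin.last (n+1))))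
      (fun f hf => hzero _ f hf)]
    have hterm : ∀ f' : Fin k → Fin (n+1),
        cTs (n+1) (k+1) ε M (Fin.snoc (fun j => (f' j).castSucc) (Fin.last (n+1)))
          = if (n+1) % 2 = (k+1) % 2 then (ε (n+1) : ℂ) * cTs n k ε M f' else 0 := by
      intro f'
      have hvals : (fun j => ((Fin.snoc (fun t => (f' t).castSucc) (Fin.last (n+1))
            : Fin (k+1) → Fin (n+2)) j : ℕ))
          = Fin.snoc (α := fun _ => ℕ) (fun t => ((f' t : ℕ))) (n+1) := by
        rw [snoc_val]
        simp
      have hle : ∀ j : Fin k, ((f' j : ℕ)) ≤ n := fun j => Nat.lt_succ_iff.mp (f' j).isLt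
      have hiff := adm_snoc_top (fun t => ((f' t : ℕ))) hle
      rw [← hvals] at hiff
      have hprod : (∏ j : Fin (k+1),
            (ε ((Fin.snoc (fun t => (f' t).castSucc) (Fin.last (n+1))
              : Fin (k+1) → Fin (n+2)) j : ℕ) : ℂ))
          = (ε (n+1) : ℂ) * ∏ j : Fin k, (ε (f' j : ℕ) : ℂ) := by
        rw [Fin.prod_univ_castSucc]
        simp only [Fin.snoc_castSucc, Fin.snoc_last, Fin.coe_castSucc, Fin.val_last]
        ring
      have halt : hatAltSum (n+1) ε (fun j => ((Fin.snoc (fun t => (f' t).castSucc)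
            (Fin.last (n+1)) : Fin (k+1) → Fin (n+2)) j : ℕ))
          = hatAltSum n ε (fun j => (f' j : ℕ)) := by
        rw [hvals]
        exact hatAltSum_snoc_top ε _ hle
      unfold cTs
      by_cases hpar : (n+1) % 2 = (k+1) % 2 <;>
        by_cases hadm : Adm n k 1 (fun j => (f' j : ℕ))
      · rw [if_pos (hiff.mpr ⟨hadm, hpar⟩), if_pos hpar, if_pos hadm, hprod, halt]
        ring
      · rw [if_neg (fun h => hadm (hiff.mp h).1), if_pos hpar, if_neg hadm, mul_zero]
      · rw [if_neg (fun h => hpar (hiff.mp h).2), if_neg hpar]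
      · rw [if_neg (fun h => hadm (hiff.mp h).1), if_neg hpar]
    rw [Finset.sum_congr rfl (fun f' _ => hterm f')]
    by_cases hpar : (n+1) % 2 = (k+1) % 2
    · simp only [if_pos hpar]
      rw [← Finset.mul_sum, cT_eq_sum]
    · simp only [if_neg hpar, Finset.sum_const_zero]
  rw [hT2]
  congr 1
  have hT1 : ∀ x' : Fin (n+1), ∑ f : Fin k → Fin (n+2),
      cTs (n+1) (k+1) ε M (Fin.snoc f x'.castSucc)
        = ∑ f' : Fin k → Fin (n+1), C * cTs n (k+1) ε M (Fin.snoc f' x') := by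
    intro x'
    rw [sum_avoid_last (fun f => cTs (n+1) (k+1) ε M (Fin.snoc f x'.castSucc))
      (fun f hf => hzero _ f hf)]
    apply Finset.sum_congr rfl
    intro f' _
    have hvals : (fun j => ((Fin.snoc (fun t => (f' t).castSucc) x'.castSucc
          : Fin (k+1) → Fin (n+2)) j : ℕ))
        = (fun j => ((Fin.snoc f' x' : Fin (k+1) → Fin (n+1)) j : ℕ)) := by
      rw [snoc_val, snoc_val]
      simp
    have hle : ∀ j : Fin (k+1), ((Fin.snoc f' x' : Fin (k+1) → Fin (n+1)) j : ℕ) ≤ n :=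
      fun j => Nat.lt_succ_iff.mp ((Fin.snoc f' x' : Fin (k+1) → Fin (n+1)) j).isLt
    have hiff : Adm (n+1) (k+1) 1 (fun j => ((Fin.snoc (fun t => (f' t).castSucc) x'.castSucc
          : Fin (k+1) → Fin (n+2)) j : ℕ))
        ↔ Adm n (k+1) 1 (fun j => ((Fin.snoc f' x' : Fin (k+1) → Fin (n+1)) j : ℕ)) := by
      rw [hvals]
      exact adm_iff_succ _ hle
    have hprod : (∏ j : Fin (k+1),
          (ε ((Fin.snoc (fun t => (f' t).castSucc) x'.castSucc
            : Fin (k+1) → Fin (n+2)) j : ℕ) : ℂ))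
        = ∏ j : Fin (k+1), (ε ((Fin.snoc f' x' : Fin (k+1) → Fin (n+1)) j : ℕ) : ℂ) :=
      Finset.prod_congr rfl (fun j _ => by rw [congrFun hvals j])
    unfold cTs
    by_cases hadm : Adm n (k+1) 1 (fun j => ((Fin.snoc f' x' : Fin (k+1) → Fin (n+1)) j : ℕ))
    · rw [if_pos (hiff.mpr hadm), if_pos hadm, hprod]
      have halt : hatAltSum (n+1) ε (fun j => ((Fin.snoc (fun t => (f' t).castSucc) x'.castSucc
            : Fin (k+1) → Fin (n+2)) j : ℕ))
          = hatAltSum n ε (fun j => ((Fin.snoc f' x' : Fin (k+1) → Fin (n+1)) j : ℕ))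
            + (-1:ℤ)^(n+1+(k+1)) * ε (n+1) := by
        rw [hvals]
        exact hatAltSum_succ_top' ε _ hadm
      rw [halt, zpow_add₀ hM]
      have hsgn : (-1:ℤ)^(n+1+(k+1)) = (-1:ℤ)^(n+k) := by
        have h2 : n+1+(k+1) = (n+k)+2 := by omega
        rw [h2, pow_add]
        norm_num
      rw [hsgn, hC]
      ring
    · rw [if_neg (fun h => hadm (hiff.mp h)), if_neg hadm, mul_zero]
  rw [Finset.sum_congr rfl (fun x' _ => hT1 x')]
  simp only [← Finset.mul_sum]
  rw [cT_eq_sum n (k+1) ε M, sum_snoc_split (cTs n (k+1) ε M)]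

end Chunk3

section Chunk4
open Finset Matrix

noncomputable def FE (ε : ℕ → ℤ) (M lam : ℂ) (n : ℕ) : ℂ :=
  ∑ j ∈ Finset.range (n+1), cT n (2*j) ε M * lam ^ j

noncomputable def FO (ε : ℕ → ℤ) (M lam : ℂ) (n : ℕ) : ℂ :=
  ∑ j ∈ Finset.range (n+1), cT n (2*j+1) ε M * lam ^ j

lemma FE_succ (ε : ℕ → ℤ) (M lam : ℂ) (hM : M ≠ 0) (n : ℕ) :
    FE ε M lam (n+1) = M ^ ((-1:ℤ)^(n+1) * ε (n+1)) * FE ε M lam n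
      + (if n % 2 = 1 then lam * (ε (n+1):ℂ) * FO ε M lam n else 0) := by
  unfold FE FO
  rw [Finset.sum_range_succ' (fun j => cT (n+1) (2*j) ε M * lam ^ j) (n+1)]
  have h0 : cT (n+1) (2*0) ε M * lam ^ 0
      = M ^ ((-1:ℤ)^(n+1) * ε (n+1)) * (cT n 0 ε M * lam ^ 0) := by
    norm_num [cT_nil_succ n ε M hM]
  have hstep : ∀ i, cT (n+1) (2*(i+1)) ε M * lam ^ (i+1)
      = M ^ ((-1:ℤ)^(n+1) * ε (n+1)) * (cT n (2*(i+1)) ε M * lam ^ (i+1))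
        + (if n % 2 = 1 then lam * (ε (n+1):ℂ) * (cT n (2*i+1) ε M * lam ^ i) else 0) := by
    intro i
    have h2 : 2*(i+1) = (2*i+1) + 1 := by ring
    rw [h2, cT_succ_succ n (2*i+1) ε M hM]
    have hsgn : (-1:ℤ)^(n+(2*i+1)) = (-1:ℤ)^(n+1) := by
      have h3 : n+(2*i+1) = (n+1) + 2*i := by omega
      rw [h3, pow_add, pow_mul, neg_one_sq, one_pow, mul_one]
    rw [hsgn]
    by_cases hn : n % 2 = 1
    · rw [if_pos (by omega), if_pos hn]; ring
    · rw [if_neg (by omega), if_neg hn]; ring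
  rw [Finset.sum_congr rfl (fun i _ => hstep i), h0, Finset.sum_add_distrib]
  rw [← Finset.mul_sum]
  have hkey : (∑ i ∈ Finset.range (n+1), cT n (2*(i+1)) ε M * lam ^ (i+1))
      + cT n (2*0) ε M * lam ^ 0
      = ∑ j ∈ Finset.range (n+1), cT n (2*j) ε M * lam ^ j := by
    rw [← Finset.sum_range_succ' (fun j => cT n (2*j) ε M * lam ^ j) (n+1)]
    rw [Finset.sum_range_succ]
    rw [cT_eq_zero ε M (by omega), zero_mul, add_zero]
  by_cases hn : n % 2 = 1
  · simp only [if_pos hn, ← Finset.mul_sum]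
    rw [← hkey]
    ring
  · simp only [if_neg hn, Finset.sum_const_zero]
    rw [← hkey]
    ring

lemma FO_succ (ε : ℕ → ℤ) (M lam : ℂ) (hM : M ≠ 0) (n : ℕ) :
    FO ε M lam (n+1) = M ^ ((-1:ℤ)^n * ε (n+1)) * FO ε M lam n
      + (if n % 2 = 0 then (ε (n+1):ℂ) * FE ε M lam n else 0) := by
  unfold FE FO
  have hstep : ∀ j, cT (n+1) (2*j+1) ε M * lam ^ j
      = M ^ ((-1:ℤ)^n * ε (n+1)) * (cT n (2*j+1) ε M * lam ^ j)
        + (if n % 2 = 0 then (ε (n+1):ℂ) * (cT n (2*j) ε M * lam ^ j) else 0) := by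
    intro j
    rw [cT_succ_succ n (2*j) ε M hM]
    have hsgn : (-1:ℤ)^(n+2*j) = (-1:ℤ)^n := by
      rw [pow_add, pow_mul, neg_one_sq, one_pow, mul_one]
    rw [hsgn]
    by_cases hn : n % 2 = 0
    · rw [if_pos (by omega), if_pos hn]; ring
    · rw [if_neg (by omega), if_neg hn]; ring
  rw [Finset.sum_congr rfl (fun j _ => hstep j), Finset.sum_add_distrib, ← Finset.mul_sum]
  have h1 : ∑ j ∈ Finset.range (n+1+1), cT n (2*j+1) ε M * lam ^ j
      = ∑ j ∈ Finset.range (n+1), cT n (2*j+1) ε M * lam ^ j := by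
    rw [Finset.sum_range_succ, cT_eq_zero ε M (by omega), zero_mul, add_zero]
  have h2 : ∑ j ∈ Finset.range (n+1+1), cT n (2*j) ε M * lam ^ j
      = ∑ j ∈ Finset.range (n+1), cT n (2*j) ε M * lam ^ j := by
    rw [Finset.sum_range_succ, cT_eq_zero ε M (by omega), zero_mul, add_zero]
  rw [h1]
  by_cases hn : n % 2 = 0
  · simp only [if_pos hn, ← Finset.mul_sum]
    rw [h2]
  · simp only [if_neg hn, Finset.sum_const_zero, add_zero]

noncomputable def Umat (M : ℂ) (e : ℤ) : Mat := !![(e:ℂ), M ^ e; M ^ (-e), 0]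
noncomputable def Vmat (M lam : ℂ) (e : ℤ) : Mat := !![lam * (e:ℂ), M ^ e; M ^ (-e), 0]

noncomputable def Amat (ε : ℕ → ℤ) (M lam : ℂ) (t : ℕ) : Mat :=
  if t % 2 = 1 then Umat M (ε t) else Vmat M lam (ε t)

noncomputable def Wmat (ε : ℕ → ℤ) (M lam : ℂ) (a : ℕ) : ℕ → Mat
  | 0 => 1
  | (L+1) => Amat ε M lam (a + L + 1) * Wmat ε M lam a L

noncomputable def Xmat (ε : ℕ → ℤ) (M lam : ℂ) (a : ℕ) : ℕ → Mat
  | 0 => 1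
  | (L+1) => Xmat ε M lam a L * Amat ε M lam (a + L + 1)

lemma cT_zero_zero (ε : ℕ → ℤ) (M : ℂ) : cT 0 0 ε M = 1 := by
  rw [cT_zero_eq]
  simp

lemma Wmat_col (ε : ℕ → ℤ) (M lam : ℂ) (hM : M ≠ 0) (n : ℕ) :
    (n % 2 = 0 → Wmat ε M lam 0 n 0 0 = FE ε M lam n ∧ Wmat ε M lam 0 n 1 0 = FO ε M lam n)
    ∧ (n % 2 = 1 → Wmat ε M lam 0 n 0 0 = FO ε M lam n ∧ Wmat ε M lam 0 n 1 0 = FE ε M lam n) := by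
  induction n with
  | zero =>
    constructor
    · intro _
      constructor
      · show (1 : Mat) 0 0 = FE ε M lam 0
        unfold FE
        simp [Matrix.one_apply, cT_zero_zero]
      · show (1 : Mat) 1 0 = FO ε M lam 0
        unfold FO
        simp [Matrix.one_apply, cT_eq_zero ε M (by omega : (0:ℕ) < 1)]
    · intro h; omega
  | succ n ih =>
    have hmul : ∀ s : Fin 2, Wmat ε M lam 0 (n+1) s 0
        = Amat ε M lam (n+1) s 0 * Wmat ε M lam 0 n 0 0
          + Amat ε M lam (n+1) s 1 * Wmat ε M lam 0 n 1 0 := by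
      intro s
      show (Amat ε M lam (0 + n + 1) * Wmat ε M lam 0 n) s 0 = _
      rw [Matrix.mul_apply, Fin.sum_univ_two]
      norm_num
    by_cases hn : n % 2 = 0
    · -- n even, n+1 odd, Amat (n+1) = Umat
      have hA : Amat ε M lam (n+1) = Umat M (ε (n+1)) := by
        unfold Amat
        rw [if_pos (by omega)]
      obtain ⟨h00, h10⟩ := ih.1 hn
      constructor
      · intro h; omega
      · intro _
        have he : ((-1:ℤ)^n) = 1 := by
          rw [← Nat.even_iff] at hn
          exact Even.neg_one_pow hn
        have ho : ((-1:ℤ)^(n+1)) = -1 := by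
          have : Odd (n+1) := by rw [Nat.odd_iff]; omega
          exact Odd.neg_one_pow this
        constructor
        · rw [hmul 0, hA, h00, h10]
          rw [FO_succ ε M lam hM n, if_pos hn, he, one_mul]
          unfold Umat
          norm_num
          ring
        · rw [hmul 1, hA, h00, h10]
          rw [FE_succ ε M lam hM n, if_neg (by omega), ho, add_zero]
          unfold Umat
          norm_num
    · -- n odd, n+1 even, Amat (n+1) = Vmat
      have hA : Amat ε M lam (n+1) = Vmat M lam (ε (n+1)) := by
        unfold Amat
        rw [if_neg (by omega)]
      obtain ⟨h00, h10⟩ := ih.2 (by omega)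
      constructor
      · intro _
        have he : ((-1:ℤ)^(n+1)) = 1 := by
          have : Even (n+1) := by rw [Nat.even_iff]; omega
          exact Even.neg_one_pow this
        have ho : ((-1:ℤ)^n) = -1 := by
          have : Odd n := by rw [Nat.odd_iff]; omega
          exact Odd.neg_one_pow this
        constructor
        · rw [hmul 0, hA, h00, h10]
          rw [FE_succ ε M lam hM n, if_pos (by omega), he, one_mul]
          unfold Vmat
          norm_num
          ring
        · rw [hmul 1, hA, h00, h10]
          rw [FO_succ ε M lam hM n, if_neg (by omega), ho, add_zero]
          unfold Vmat
          norm_num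
      · intro h; omega

lemma Amat_inv_transpose (ε : ℕ → ℤ) (M lam : ℂ) (hM : M ≠ 0) (t : ℕ) :
    Amat ε M⁻¹ lam t = (Amat ε M lam t)ᵀ := by
  have hU : ∀ e : ℤ, Umat M⁻¹ e = (Umat M e)ᵀ := by
    intro e
    unfold Umat
    rw [_root_.inv_zpow, ← _root_.zpow_neg, _root_.inv_zpow, ← _root_.zpow_neg, neg_neg]
    ext i j
    fin_cases i <;> fin_cases j <;> simp [Matrix.transpose_apply]
  have hV : ∀ e : ℤ, Vmat M⁻¹ lam e = (Vmat M lam e)ᵀ := by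
    intro e
    unfold Vmat
    rw [_root_.inv_zpow, ← _root_.zpow_neg, _root_.inv_zpow, ← _root_.zpow_neg, neg_neg]
    ext i j
    fin_cases i <;> fin_cases j <;> simp [Matrix.transpose_apply]
  unfold Amat
  by_cases ht : t % 2 = 1
  · rw [if_pos ht, if_pos ht, hU]
  · rw [if_neg ht, if_neg ht, hV]

lemma Wmat_inv_transpose (ε : ℕ → ℤ) (M lam : ℂ) (hM : M ≠ 0) (n : ℕ) :
    Wmat ε M⁻¹ lam 0 n = (Xmat ε M lam 0 n)ᵀ := by
  induction n with
  | zero => simp [Wmat, Xmat]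
  | succ n ih =>
    show Amat ε M⁻¹ lam (0+n+1) * Wmat ε M⁻¹ lam 0 n = (Xmat ε M lam 0 n * Amat ε M lam (0+n+1))ᵀ
    rw [Matrix.transpose_mul, ih, Amat_inv_transpose ε M lam hM]

end Chunk4

section Chunk5
open Matrix

def Pinv (z lam : ℂ) (X Y : Mat) : Prop :=
  Y 0 0 = X 0 0 ∧ Y 1 1 = X 1 1 ∧ X 0 1 = lam * Y 0 1 ∧ Y 1 0 = lam * X 1 0 ∧
  z * (X 1 1 - X 0 0) = lam * X 1 0 - X 0 1 ∧
  X 0 0 * X 1 1 - X 0 1 * X 1 0 = 1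

def Rinv (z lam : ℂ) (X Y : Mat) : Prop :=
  Y 0 0 = X 0 0 ∧ Y 1 1 = X 1 1 ∧ Y 0 1 = lam * X 0 1 ∧ X 1 0 = lam * Y 1 0 ∧
  z * (X 1 1 - X 0 0) = X 1 0 - lam * X 0 1 ∧
  X 0 0 * X 1 1 - X 0 1 * X 1 0 = 1

lemma trip_entry (A X B : Mat) (i j : Fin 2) :
    (A * X * B) i j = A i 0 * X 0 0 * B 0 j + A i 0 * X 0 1 * B 1 j
      + A i 1 * X 1 0 * B 0 j + A i 1 * X 1 1 * B 1 j := by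
  rw [Matrix.mul_apply, Fin.sum_univ_two, Matrix.mul_apply, Matrix.mul_apply,
    Fin.sum_univ_two, Fin.sum_univ_two]
  ring

lemma closure_RP (z lam e m w : ℂ) (hw : m * w = 1) (he : e * e = 1)
    (hz : z = e * (m - w)) (X Y : Mat) (h : Rinv z lam X Y) :
    Pinv z lam (!![lam * e, m; w, 0] * X * !![e, m; w, 0])
      (!![e, m; w, 0] * Y * !![lam * e, m; w, 0]) := by
  obtain ⟨h1, h2, h3, h4, h5, h6⟩ := h
  refine ⟨?_, ?_, ?_, ?_, ?_, ?_⟩ <;>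
    simp only [trip_entry, Matrix.of_apply, Matrix.cons_val', Matrix.cons_val_zero,
      Matrix.cons_val_one, Matrix.head_cons, Matrix.head_fin_const, Matrix.empty_val',
      Matrix.cons_val_fin_one]
  · linear_combination (lam*e*e)*h1 + (e*w)*h3 + (m*w)*h2 - (e*m)*h4
  · linear_combination (w*m)*h1
  · linear_combination (-(lam*e*m))*h1 + (m*m)*h4
  · linear_combination (lam*e*w)*h1 + (w*w)*h3
  · rcases mul_self_eq_one_iff.mp he with rfl | rfl
    · linear_combination
        (X 1 1 - X 0 0 - m*(X 1 0) - m*w*(X 1 1) + m*w*(X 0 0) - lam*(X 0 0) - lam*w*(X 0 1)) * hz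
        + (X 1 0 + w*(X 1 1) - w*(X 0 0) - m*(X 1 1) + m*(X 0 0) - lam*(X 0 1)) * hw
        + (-1) * h5
    · linear_combination
        (X 1 1 - X 0 0 + m*(X 1 0) - m*w*(X 1 1) + m*w*(X 0 0) - lam*(X 0 0) + lam*w*(X 0 1)) * hz
        + (X 1 0 - w*(X 1 1) + w*(X 0 0) + m*(X 1 1) - m*(X 0 0) - lam*(X 0 1)) * hw
        + (-1) * h5
  · linear_combination (m*m*w*w)*h6 + (m*w+1)*hw

lemma closure_PR (z lam e m w : ℂ) (hw : m * w = 1) (he : e * e = 1)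
    (hz : z = e * (m - w)) (X Y : Mat) (h : Pinv z lam X Y) :
    Rinv z lam (!![e, m; w, 0] * X * !![lam * e, m; w, 0])
      (!![lam * e, m; w, 0] * Y * !![e, m; w, 0]) := by
  obtain ⟨h1, h2, h3, h4, h5, h6⟩ := h
  refine ⟨?_, ?_, ?_, ?_, ?_, ?_⟩ <;>
    simp only [trip_entry, Matrix.of_apply, Matrix.cons_val', Matrix.cons_val_zero,
      Matrix.cons_val_one, Matrix.head_cons, Matrix.head_fin_const, Matrix.empty_val',
      Matrix.cons_val_fin_one]
  · linear_combination (lam*e*e)*h1 + (m*w)*h2 - (e*w)*h3 + (e*m)*h4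
  · linear_combination (w*m)*h1
  · linear_combination (lam*e*m)*h1 + (m*m)*h4
  · linear_combination (-(lam*e*w))*h1 + (w*w)*h3
  · rcases mul_self_eq_one_iff.mp he with rfl | rfl
    · linear_combination
        (X 1 1 - X 0 0 - w*(X 0 1) - m*w*(X 1 1) + m*w*(X 0 0) - lam*(X 0 0) - lam*m*(X 1 0)) * hz
        + (-(X 0 1) + w*(X 1 1) - w*(X 0 0) - m*(X 1 1) + m*(X 0 0) + lam*(X 1 0)) * hw
        + (-1) * h5
    · linear_combination
        (X 1 1 - X 0 0 + w*(X 0 1) - m*w*(X 1 1) + m*w*(X 0 0) - lam*(X 0 0) + lam*m*(X 1 0)) * hz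
        + (-(X 0 1) - w*(X 1 1) + w*(X 0 0) + m*(X 1 1) - m*(X 0 0) + lam*(X 1 0)) * hw
        + (-1) * h5
  · linear_combination (m*m*w*w)*h6 + (m*w+1)*hw

lemma Pinv_one (z lam : ℂ) : Pinv z lam 1 1 := by
  refine ⟨rfl, rfl, ?_, ?_, ?_, ?_⟩ <;>
    simp [Matrix.one_apply]

lemma Rinv_one (z lam : ℂ) : Rinv z lam 1 1 := by
  refine ⟨rfl, rfl, ?_, ?_, ?_, ?_⟩ <;>
    simp [Matrix.one_apply]

end Chunk5

section Chunk6
open Matrix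

lemma Wmat_succ (ε : ℕ → ℤ) (M lam : ℂ) (a L : ℕ) :
    Wmat ε M lam a (L+1) = Amat ε M lam (a+L+1) * Wmat ε M lam a L := rfl

lemma Xmat_succ (ε : ℕ → ℤ) (M lam : ℂ) (a L : ℕ) :
    Xmat ε M lam a (L+1) = Xmat ε M lam a L * Amat ε M lam (a+L+1) := rfl

lemma Wmat_shift (ε : ℕ → ℤ) (M lam : ℂ) (a : ℕ) : ∀ L,
    Wmat ε M lam a (L+1) = Wmat ε M lam (a+1) L * Amat ε M lam (a+1) := by
  intro L
  induction L with
  | zero =>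
    show Amat ε M lam (a+0+1) * Wmat ε M lam a 0 = Wmat ε M lam (a+1) 0 * Amat ε M lam (a+1)
    show Amat ε M lam (a+0+1) * 1 = 1 * Amat ε M lam (a+1)
    rw [mul_one, one_mul]
  | succ L ih =>
    rw [Wmat_succ ε M lam a (L+1), ih, Wmat_succ ε M lam (a+1) L]
    rw [show a + (L+1) + 1 = (a+1) + L + 1 by omega, mul_assoc]

lemma Xmat_shift (ε : ℕ → ℤ) (M lam : ℂ) (a : ℕ) : ∀ L,
    Xmat ε M lam a (L+1) = Amat ε M lam (a+1) * Xmat ε M lam (a+1) L := by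
  intro L
  induction L with
  | zero =>
    show Xmat ε M lam a 0 * Amat ε M lam (a+0+1) = _
    show 1 * Amat ε M lam (a+0+1) = Amat ε M lam (a+1) * 1
    rw [mul_one, one_mul]
  | succ L ih =>
    rw [Xmat_succ ε M lam a (L+1), ih, Xmat_succ ε M lam (a+1) L]
    rw [show a + (L+1) + 1 = (a+1) + L + 1 by omega, mul_assoc]

lemma window_inv (ε : ℕ → ℤ) (M lam : ℂ) (hM : M ≠ 0) (n h : ℕ) (hn : n = 2*h)
    (hε : ∀ i, 1 ≤ i → i ≤ n → ε i = 1 ∨ ε i = -1)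
    (hsym : ∀ i, 1 ≤ i → i ≤ n → ε i = ε (n + 1 - i)) :
    ∀ t, t ≤ h →
      ((h - t) % 2 = 0 →
        Pinv (M - M⁻¹) lam (Wmat ε M lam (h-t) (2*t)) (Xmat ε M lam (h-t) (2*t)))
      ∧ ((h - t) % 2 = 1 →
        Rinv (M - M⁻¹) lam (Wmat ε M lam (h-t) (2*t)) (Xmat ε M lam (h-t) (2*t))) := by
  intro t
  induction t with
  | zero =>
    intro _
    constructor <;> intro _
    · exact Pinv_one _ _
    · exact Rinv_one _ _
  | succ t ih =>
    intro ht
    have ht' : t ≤ h := by omega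
    obtain ⟨ihP, ihR⟩ := ih ht'
    set a := h - (t+1) with ha
    have ha1 : a + 1 = h - t := by omega
    have hbound : 1 ≤ a + 1 ∧ a + 1 ≤ n := by omega
    set e : ℤ := ε (a+1) with he'
    have hee : ((e:ℂ)) * ((e:ℂ)) = 1 := by
      rcases hε (a+1) hbound.1 hbound.2 with h1 | h1 <;> rw [he', h1] <;> norm_num
    have hw : M ^ e * M ^ (-e) = 1 := by
      rw [← zpow_add₀ hM]
      simp
    have hz : M - M⁻¹ = (e:ℂ) * (M ^ e - M ^ (-e)) := by
      rcases hε (a+1) hbound.1 hbound.2 with h1 | h1 <;> rw [he', h1] <;> push_cast <;>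
        simp [_root_.zpow_one, _root_.zpow_neg_one] <;> ring
    have htop : a + (2*t+1) + 1 = n - a := by omega
    have hεtop : ε (n - a) = e := by
      rw [he']
      rw [show n - a = n + 1 - (a+1) by omega]
      exact (hsym (a+1) hbound.1 hbound.2).symm
    -- decompose the window
    have hW : Wmat ε M lam a (2*(t+1))
        = Amat ε M lam (n-a) * (Wmat ε M lam (a+1) (2*t) * Amat ε M lam (a+1)) := by
      rw [show 2*(t+1) = (2*t+1)+1 by omega, Wmat_succ, htop, Wmat_shift]
    have hX : Xmat ε M lam a (2*(t+1))
        = Amat ε M lam (a+1) * Xmat ε M lam (a+1) (2*t) * Amat ε M lam (n-a) := by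
      rw [show 2*(t+1) = (2*t+1)+1 by omega, Xmat_succ, htop, Xmat_shift]
    constructor
    · -- a even : Amat (a+1) = Umat, Amat (n-a) = Vmat ; previous window is R-type
      intro hpar
      have hA1 : Amat ε M lam (a+1) = Umat M e := by
        unfold Amat
        rw [if_pos (by omega), ← he']
      have hA2 : Amat ε M lam (n-a) = Vmat M lam e := by
        unfold Amat
        rw [if_neg (by omega), hεtop]
      have hprev : Rinv (M - M⁻¹) lam (Wmat ε M lam (a+1) (2*t)) (Xmat ε M lam (a+1) (2*t)) := by
        rw [ha1]
        exact ihR (by omega)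
      have := closure_RP (M - M⁻¹) lam (e:ℂ) (M ^ e) (M ^ (-e)) hw hee hz
        (Wmat ε M lam (a+1) (2*t)) (Xmat ε M lam (a+1) (2*t)) hprev
      rw [hW, hX, hA1, hA2]
      show Pinv (M - M⁻¹) lam
        (Vmat M lam e * (Wmat ε M lam (a+1) (2*t) * Umat M e))
        (Umat M e * Xmat ε M lam (a+1) (2*t) * Vmat M lam e)
      rw [← mul_assoc]
      exact this
    · -- a odd
      intro hpar
      have hA1 : Amat ε M lam (a+1) = Vmat M lam e := by
        unfold Amat
        rw [if_neg (by omega), ← he']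
      have hA2 : Amat ε M lam (n-a) = Umat M e := by
        unfold Amat
        rw [if_pos (by omega), hεtop]
      have hprev : Pinv (M - M⁻¹) lam (Wmat ε M lam (a+1) (2*t)) (Xmat ε M lam (a+1) (2*t)) := by
        rw [ha1]
        exact ihP (by omega)
      have := closure_PR (M - M⁻¹) lam (e:ℂ) (M ^ e) (M ^ (-e)) hw hee hz
        (Wmat ε M lam (a+1) (2*t)) (Xmat ε M lam (a+1) (2*t)) hprev
      rw [hW, hX, hA1, hA2]
      show Rinv (M - M⁻¹) lam
        (Umat M e * (Wmat ε M lam (a+1) (2*t) * Vmat M lam e))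
        (Vmat M lam e * Xmat ε M lam (a+1) (2*t) * Umat M e)
      rw [← mul_assoc]
      exact this

end Chunk6

section Final
open Matrix

/-- Write `f = f_{α−1}(M,λ̃)`, `g = g_{α−1}(M,λ̃)`,
`ḡ = g_{α−1}(M⁻¹,λ̃)`.  Then `z·(1 − f² + λ̃·g·ḡ) = λ̃·f·(g − ḡ)`;
in particular if `f = 0` then `−λ̃·g·ḡ = 1`. -/
theorem fg_identity (M : ℂ) (hM0 : M ≠ 0) (hM1 : M ≠ 1) (hMneg1 : M ≠ -1)
    (lam : ℂ) (α : ℕ) (hodd : Odd α) (hα : 3 ≤ α) (ε : ℕ → ℤ)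
    (hε : ∀ i, 1 ≤ i → i ≤ α - 1 → ε i = 1 ∨ ε i = -1)
    (hsym : ∀ i, 1 ≤ i → i ≤ α - 1 → ε i = ε (α - i))
    (lamT : ℂ) (hlamT : lamT = lam + (M - M⁻¹) ^ 2)
    (f g gbar : ℂ)
    (hf : f = ∑ k ∈ Finset.range ((α - 1) / 2 + 1), cT (α - 1) (2 * k) ε M * lamT ^ k)
    (hg : g = ∑ k ∈ Finset.range ((α - 3) / 2 + 1), cT (α - 1) (2 * k + 1) ε M * lamT ^ k)
    (hgbar : gbar =
      ∑ k ∈ Finset.range ((α - 3) / 2 + 1), cT (α - 1) (2 * k + 1) ε M⁻¹ * lamT ^ k) :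
    (M - M⁻¹) * (1 - f ^ 2 + lamT * g * gbar) = lamT * f * (g - gbar) ∧
      (f = 0 → -lamT * g * gbar = 1) := by
  classical
  obtain ⟨r, hr⟩ := hodd
  have hMi0 : M⁻¹ ≠ 0 := inv_ne_zero hM0
  -- n = α - 1 = 2 * h2
  set h2 : ℕ := (α - 1) / 2 with hh2def
  have hh2 : α - 1 = 2 * h2 := by omega
  -- f = FE, g = FO, gbar = FO (M⁻¹)
  have hfFE : f = FE ε M lamT (α - 1) := by
    rw [hf]
    unfold FE
    apply Finset.sum_subset (Finset.range_subset_range.mpr (by omega))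
    intro k _ hk
    rw [Finset.mem_range, not_lt] at hk
    rw [cT_eq_zero ε M (by omega), zero_mul]
  have hgFO : g = FO ε M lamT (α - 1) := by
    rw [hg]
    unfold FO
    apply Finset.sum_subset (Finset.range_subset_range.mpr (by omega))
    intro k _ hk
    rw [Finset.mem_range, not_lt] at hk
    rw [cT_eq_zero ε M (by omega), zero_mul]
  have hgbarFO : gbar = FO ε M⁻¹ lamT (α - 1) := by
    rw [hgbar]
    unfold FO
    apply Finset.sum_subset (Finset.range_subset_range.mpr (by omega))
    intro k _ hk
    rw [Finset.mem_range, not_lt] at hk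
    rw [cT_eq_zero ε M⁻¹ (by omega), zero_mul]
  have hpar : (α - 1) % 2 = 0 := by omega
  -- matrix entries
  obtain ⟨hW00, hW10⟩ := (Wmat_col ε M lamT hM0 (α - 1)).1 hpar
  obtain ⟨hV00, hV10⟩ := (Wmat_col ε M⁻¹ lamT hMi0 (α - 1)).1 hpar
  have hX01 : Xmat ε M lamT 0 (α - 1) 0 1 = gbar := by
    have h1 : Wmat ε M⁻¹ lamT 0 (α - 1) 1 0 = (Xmat ε M lamT 0 (α - 1))ᵀ 1 0 := by
      rw [Wmat_inv_transpose ε M lamT hM0]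
    rw [Matrix.transpose_apply] at h1
    rw [← h1, hV10, ← hgbarFO]
  -- the palindromic invariant
  have hwin := (window_inv ε M lamT hM0 (α - 1) h2 hh2 hε
    (by
      intro i h1 h2'
      rw [show (α - 1) + 1 - i = α - i by omega]
      exact hsym i h1 h2') h2 le_rfl).1 (by simp)
  rw [Nat.sub_self, ← hh2] at hwin
  obtain ⟨p1, p2, p3, p4, p5, p6⟩ := hwin
  rw [hX01] at p3
  rw [hW00, hW10] at p5 p6
  rw [← hfFE] at hW00
  rw [← hgFO] at hW10
  rw [← hfFE, ← hgFO] at p5 p6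
  constructor
  · linear_combination (-(M - M⁻¹)) * p6 + f * p5
      + (-((M - M⁻¹) * g + f)) * p3
  · intro hf0
    linear_combination p6 + g * p3 + (-(Wmat ε M lamT 0 (α - 1) 1 1)) * hf0

end Final
end

section
/- For all n ≥ 2: f_n = M^{2e_n}·f_{n−2} + (λ̃ + 1 − M^{2e_n})·f_{n−1} + e_n·λ̃·(M + M⁻¹)·ḡ_{n−1}; for all n ≥ 1: g_n = e_n·M^{−e_n}·f_{n−1} + M^{−2e_n}·ḡ_{n−1}; and moreover g_n = Σ_{i=1}^{n} e_i·M^{μ_i}·f_{i−1}, where μ_i = (−1)^{n−i}·e_i − 2·Σ_{j=i}^{n} (−1)^{n−j}·e_j. -/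
/-- The symmetric sequence `e(n) = (e_n, …, e₂, e₁, e₁, e₂, …, e_n)` of length `2n`,
as a function of the position `i ∈ {1, …, 2n}`. -/
def eseq (e : ℕ → ℤ) (n : ℕ) : ℕ → ℤ := fun i => if i ≤ n then e (n + 1 - i) else e (i - n)

/-- `f_n(M,λ̃) = Σ_{k=0}^{n} c̃_{2k}^{2n}(M, e(n))·λ̃ᵏ`, the Riley polynomial of the kmot
group `G(e(n))`; in particular `f₀ = 1`. -/
noncomputable def fpoly (e : ℕ → ℤ) (M lamT : ℂ) (n : ℕ) : ℂ :=
  ∑ k ∈ Finset.range (n + 1), cT (2 * n) (2 * k) (eseq e n) M * lamT ^ k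

/-- `g_n(M,λ̃) = Σ_{k=0}^{n−1} c̃_{2k+1}^{2n}(M, e(n))·λ̃ᵏ`; in particular `g₀ = 0`. -/
noncomputable def gpoly (e : ℕ → ℤ) (M lamT : ℂ) (n : ℕ) : ℂ :=
  ∑ k ∈ Finset.range n, cT (2 * n) (2 * k + 1) (eseq e n) M * lamT ^ k

namespace FG
open Finset

noncomputable def Ssum (n k s : ℕ) (ε : ℕ → ℤ) (M : ℂ) : ℂ :=
  ∑ i : Fin k → Fin (n + 1),
    if Adm n k s (fun j => (i j : ℕ))
    then (∏ j : Fin k, (ε (i j : ℕ) : ℂ)) * M ^ hatAltSum n ε (fun j => (i j : ℕ))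
    else 0

lemma cT_eq (n k : ℕ) (ε : ℕ → ℤ) (M : ℂ) : cT n k ε M = Ssum n k 1 ε M := rfl

lemma Ssum_vanish {n k : ℕ} (s : ℕ) (ε : ℕ → ℤ) (M : ℂ) (h : n < k) :
    Ssum n k s ε M = 0 := by
  apply Finset.sum_eq_zero
  intro i _
  rw [if_neg]
  rintro ⟨hmono, hb, -⟩
  have key : ∀ m : ℕ, ∀ hm : m < k, m < (i ⟨m, hm⟩ : ℕ) := by
    intro m
    induction m with
    | zero => intro hm; exact (hb ⟨0, hm⟩).1
    | succ m ih =>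
      intro hm
      have h1 : m < k := by omega
      have h2 : (i ⟨m, h1⟩ : ℕ) < (i ⟨m+1, hm⟩ : ℕ) :=
        hmono ⟨m, h1⟩ ⟨m+1, hm⟩ (by simp [Fin.lt_def])
      have h3 := ih h1
      omega
  have hk : k - 1 < k := by omega
  have h4 := key (k-1) hk
  have h5 := (hb ⟨k-1, hk⟩).2
  omega

lemma Ssum_base (s : ℕ) (ε : ℕ → ℤ) (M : ℂ) : Ssum 0 0 s ε M = 1 := by
  rw [Ssum]
  rw [Finset.sum_eq_single_of_mem (fun _ => 0) (Finset.mem_univ _)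
    (fun b _ hb => absurd (funext fun j => j.elim0) hb)]
  rw [if_pos ⟨fun j => j.elim0, fun j => j.elim0, fun j => j.elim0⟩]
  have : hatAltSum 0 ε (fun j : Fin 0 => ((0 : Fin 1) : ℕ)) = 0 := by
    rw [hatAltSum]; simp
  rw [this]
  simp

lemma Adm_le {n k s : ℕ} {v : Fin k → ℕ} (h : Adm n k s v) : k ≤ n := by
  rcases Nat.eq_zero_or_pos k with rfl | hk
  · omega
  obtain ⟨hmono, hb, -⟩ := h
  have key : ∀ m : ℕ, ∀ hm : m < k, m < v ⟨m, hm⟩ := by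
    intro m
    induction m with
    | zero => intro hm; exact (hb ⟨0, hm⟩).1
    | succ m ih =>
      intro hm
      have h1 : m < k := by omega
      have h2 : v ⟨m, h1⟩ < v ⟨m+1, hm⟩ := hmono ⟨m, h1⟩ ⟨m+1, hm⟩ (by simp [Fin.lt_def])
      have h3 := ih h1
      omega
  have h4 := key (k-1) (by omega)
  have h5 := (hb ⟨k-1, by omega⟩).2
  omega

lemma filter_card_eq {k m : ℕ} (i : Fin k → ℕ)
    (hmono : ∀ j j' : Fin k, j < j' → i j < i j')
    (hb : ∀ j, 1 ≤ i j ∧ i j ≤ m) :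
    ((Finset.Icc 1 m).filter fun t => ¬∃ j, i j = t).card = m - k := by
  have hinj : Function.Injective i := by
    intro a b hab
    rcases lt_trichotomy a b with h | h | h
    · exact absurd hab (by have := hmono a b h; omega)
    · exact h
    · exact absurd hab (by have := hmono b a h; omega)
  have himg : (Finset.Icc 1 m).filter (fun t => ∃ j, i j = t)
      = Finset.image i Finset.univ := by
    ext t
    simp only [Finset.mem_filter, Finset.mem_image, Finset.mem_univ, true_and, Finset.mem_Icc]
    constructor
    · rintro ⟨-, j, rfl⟩; exact ⟨j, rfl⟩
    · rintro ⟨j, rfl⟩; exact ⟨⟨(hb j).1, (hb j).2⟩, j, rfl⟩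
  rw [Finset.filter_not, Finset.card_sdiff_of_subset (Finset.filter_subset _ _), himg,
    Finset.card_image_of_injective _ hinj]
  simp [Nat.card_Icc]

lemma hat_no_top {n k : ℕ} (ε : ℕ → ℤ) (i : Fin k → ℕ)
    (hmono : ∀ j j' : Fin k, j < j' → i j < i j')
    (hb : ∀ j, 1 ≤ i j ∧ i j ≤ n) :
    hatAltSum (n+1) ε i = hatAltSum n ε i + (-1:ℤ)^(n+1-k) * ε (n+1) := by
  rw [hatAltSum, hatAltSum, ← Finset.insert_Icc_right_eq_Icc_add_one (by omega : 1 ≤ n+1),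
    Finset.sum_insert (by simp)]
  rw [if_neg (by rintro ⟨j, hj⟩; have := (hb j).2; omega)]
  rw [filter_card_eq i hmono (fun j => ⟨(hb j).1, by have := (hb j).2; omega⟩)]
  ring

lemma hat_top {n k' : ℕ} (ε : ℕ → ℤ) (i : Fin (k'+1) → ℕ)
    (hlast : i (Fin.last k') = n+1)
    (hb : ∀ j : Fin k', i j.castSucc ≤ n) :
    hatAltSum (n+1) ε i = hatAltSum n ε (fun j => i j.castSucc) := by
  have hmem : ∀ t, t ≤ n → ((∃ j, i j = t) ↔ (∃ j : Fin k', i j.castSucc = t)) := by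
    intro t ht
    constructor
    · rintro ⟨j, hj⟩
      rcases Fin.eq_castSucc_or_eq_last j with ⟨j', rfl⟩ | rfl
      · exact ⟨j', hj⟩
      · rw [hlast] at hj; omega
    · rintro ⟨j, hj⟩; exact ⟨j.castSucc, hj⟩
  rw [hatAltSum, hatAltSum, ← Finset.insert_Icc_right_eq_Icc_add_one (by omega : 1 ≤ n+1),
    Finset.sum_insert (by simp)]
  rw [if_pos ⟨Fin.last k', hlast⟩, zero_add]
  apply Finset.sum_congr rfl
  intro t ht
  simp only [Finset.mem_Icc] at ht
  rw [show ((Finset.Icc 1 t).filter fun u => ¬∃ j, i j = u)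
      = ((Finset.Icc 1 t).filter fun u => ¬∃ j : Fin k', i j.castSucc = u) from
    Finset.filter_congr (fun u hu => by
      simp only [Finset.mem_Icc] at hu
      rw [hmem u (by omega)])]
  exact if_congr (hmem t ht.2) rfl rfl

lemma Ssum_succ (n k s : ℕ) (ε : ℕ → ℤ) (M : ℂ) (hM : M ≠ 0) :
    Ssum (n+1) k s ε M =
      (if 1 ≤ k ∧ (n+1) % 2 = (k - 1 + s) % 2
        then (ε (n+1) : ℂ) * Ssum n (k-1) s ε M else 0)
      + M ^ ((-1 : ℤ)^(n+1+k) * ε (n+1)) * Ssum n k s ε M := by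
  have hsplit : Ssum (n+1) k s ε M
      = (∑ i : Fin k → Fin (n+2), if (∃ j, (i j : ℕ) = n+1) then
            (if Adm (n+1) k s (fun j => (i j : ℕ))
              then (∏ j, (ε (i j : ℕ) : ℂ)) * M ^ hatAltSum (n+1) ε (fun j => (i j : ℕ))
              else 0) else 0)
        + (∑ i : Fin k → Fin (n+2), if ¬(∃ j, (i j : ℕ) = n+1) then
            (if Adm (n+1) k s (fun j => (i j : ℕ))
              then (∏ j, (ε (i j : ℕ) : ℂ)) * M ^ hatAltSum (n+1) ε (fun j => (i j : ℕ))
              else 0) else 0) := by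
    rw [Ssum, ← Finset.sum_add_distrib]
    apply Finset.sum_congr rfl
    intro i _
    by_cases h : ∃ j, (i j : ℕ) = n+1
    · rw [if_pos h, if_neg (not_not_intro h), add_zero]
    · rw [if_neg h, if_pos h, zero_add]
  rw [hsplit]
  congr 1
  · -- part A : tuples containing n+1
    rcases Nat.eq_zero_or_pos k with rfl | hk
    · rw [if_neg (by omega)]
      apply Finset.sum_eq_zero
      intro i _
      rw [if_neg (by rintro ⟨j, -⟩; exact j.elim0)]
    obtain ⟨k', rfl⟩ : ∃ k', k = k'+1 := ⟨k-1, by omega⟩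
    have hkey : ∀ a : Fin (k'+1) → Fin (n+2),
        (∃ j, (a j : ℕ) = n+1) →
        (∀ j j' : Fin (k'+1), j < j' → (a j : ℕ) < (a j' : ℕ)) →
        (∀ j, 1 ≤ (a j : ℕ) ∧ (a j : ℕ) ≤ n+1) →
        ((a (Fin.last k') : ℕ) = n+1 ∧ ∀ j : Fin k', (a j.castSucc : ℕ) ≤ n) := by
      intro a hex hmono hb
      have hble : ∀ j : Fin k', (a j.castSucc : ℕ) ≤ n := fun j => by
        have h1 := hmono j.castSucc (Fin.last k') (Fin.castSucc_lt_last j)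
        have h2 := (hb (Fin.last k')).2
        omega
      refine ⟨?_, hble⟩
      obtain ⟨j, hj⟩ := hex
      rcases Fin.eq_castSucc_or_eq_last j with ⟨j', rfl⟩ | rfl
      · have := hble j'
        omega
      · exact hj
    by_cases hpar : (n+1) % 2 = (k'+1-1+s) % 2
    · rw [if_pos ⟨by omega, hpar⟩]
      rw [show k'+1-1 = k' from rfl] at hpar ⊢
      rw [Ssum, Finset.mul_sum,
        Finset.sum_congr rfl (fun (i' : Fin k' → Fin (n+1)) (_ : i' ∈ Finset.univ) => by
          rw [mul_ite, mul_zero]),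
        Finset.sum_congr rfl (fun (i : Fin (k'+1) → Fin (n+2)) (_ : i ∈ Finset.univ) =>
          show (if (∃ j, (i j : ℕ) = n+1) then
            (if Adm (n+1) (k'+1) s (fun j => (i j : ℕ))
              then (∏ j, (ε (i j : ℕ) : ℂ)) * M ^ hatAltSum (n+1) ε (fun j => (i j : ℕ))
              else 0) else 0)
            = if (∃ j, (i j : ℕ) = n+1) ∧ Adm (n+1) (k'+1) s (fun j => (i j : ℕ))
            then (∏ j, (ε (i j : ℕ) : ℂ)) * M ^ hatAltSum (n+1) ε (fun j => (i j : ℕ))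
            else 0 from by
          by_cases h1 : ∃ j, (i j : ℕ) = n+1 <;>
            by_cases h2 : Adm (n+1) (k'+1) s (fun j => (i j : ℕ)) <;>
            simp [h1, h2]),
        ← Finset.sum_filter, ← Finset.sum_filter]
      apply Finset.sum_nbij'
        (i := fun (i : Fin (k'+1) → Fin (n+2)) (j : Fin k') =>
          (⟨min (i j.castSucc : ℕ) n, by omega⟩ : Fin (n+1)))
        (j := fun (i' : Fin k' → Fin (n+1)) =>
          Fin.snoc (fun j => (⟨(i' j : ℕ), by have := (i' j).isLt; omega⟩ : Fin (n+2)))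
            (⟨n+1, by omega⟩ : Fin (n+2)))
      · -- maps to
        intro a ha
        simp only [Finset.mem_filter, Finset.mem_univ, true_and] at ha ⊢
        obtain ⟨hex, hadm⟩ := ha
        have hmono : ∀ j j' : Fin (k'+1), j < j' → (a j : ℕ) < (a j' : ℕ) := hadm.1
        have hb : ∀ j, 1 ≤ (a j : ℕ) ∧ (a j : ℕ) ≤ n+1 := hadm.2.1
        have hp : ∀ j : Fin (k'+1), (a j : ℕ) % 2 = (j.val + s) % 2 := hadm.2.2
        obtain ⟨hlast, hble⟩ := hkey a hex hmono hb
        refine ⟨fun j j' hjj => ?_, fun j => ?_, fun j => ?_⟩ <;> dsimp only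
        · rw [min_eq_left (hble j), min_eq_left (hble j')]
          exact hmono j.castSucc j'.castSucc (Fin.castSucc_lt_castSucc_iff.mpr hjj)
        · rw [min_eq_left (hble j)]
          exact ⟨(hb j.castSucc).1, hble j⟩
        · rw [min_eq_left (hble j)]
          have h3 := hp j.castSucc
          rwa [Fin.coe_castSucc] at h3
      · -- maps from
        intro a ha
        simp only [Finset.mem_filter, Finset.mem_univ, true_and] at ha ⊢
        have hmono : ∀ j j' : Fin k', j < j' → (a j : ℕ) < (a j' : ℕ) := ha.1
        have hb : ∀ j, 1 ≤ (a j : ℕ) ∧ (a j : ℕ) ≤ n := ha.2.1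
        have hp : ∀ j : Fin k', (a j : ℕ) % 2 = (j.val + s) % 2 := ha.2.2
        constructor
        · exact ⟨Fin.last k', by simp [Fin.snoc_last]⟩
        refine ⟨fun j j' hjj => ?_, fun j => ?_, fun j => ?_⟩
        · rcases Fin.eq_castSucc_or_eq_last j' with ⟨j'1, rfl⟩ | rfl
          · rcases Fin.eq_castSucc_or_eq_last j with ⟨j1, rfl⟩ | rfl
            · simp only [Fin.snoc_castSucc]
              try dsimp only
              exact hmono j1 j'1 (Fin.castSucc_lt_castSucc_iff.mpr hjj)
            · exfalso
              have h4 := j'1.isLt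
              simp only [Fin.lt_def, Fin.coe_castSucc, Fin.val_last] at hjj
              omega
          · rcases Fin.eq_castSucc_or_eq_last j with ⟨j1, rfl⟩ | rfl
            · simp only [Fin.snoc_castSucc, Fin.snoc_last]
              try dsimp only
              have := (hb j1).2
              omega
            · exact absurd hjj (lt_irrefl _)
        · rcases Fin.eq_castSucc_or_eq_last j with ⟨j1, rfl⟩ | rfl
          · simp only [Fin.snoc_castSucc]
            try dsimp only
            exact ⟨(hb j1).1, by have := (hb j1).2; omega⟩
          · simp only [Fin.snoc_last]
            try dsimp only
            omega
        · rcases Fin.eq_castSucc_or_eq_last j with ⟨j1, rfl⟩ | rfl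
          · simp only [Fin.snoc_castSucc]
            try dsimp only
            have h3 := hp j1
            rw [Fin.coe_castSucc]
            exact h3
          · simp only [Fin.snoc_last]
            try dsimp only
            rw [Fin.val_last]
            exact hpar
      · -- left inverse
        intro a ha
        simp only [Finset.mem_filter, Finset.mem_univ, true_and] at ha
        obtain ⟨hex, hadm⟩ := ha
        have hmono : ∀ j j' : Fin (k'+1), j < j' → (a j : ℕ) < (a j' : ℕ) := hadm.1
        have hb : ∀ j, 1 ≤ (a j : ℕ) ∧ (a j : ℕ) ≤ n+1 := hadm.2.1
        obtain ⟨hlast, hble⟩ := hkey a hex hmono hb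
        funext j
        rcases Fin.eq_castSucc_or_eq_last j with ⟨j1, rfl⟩ | rfl
        · simp only [Fin.snoc_castSucc]
          apply Fin.ext
          try dsimp only
          have := hble j1
          omega
        · simp only [Fin.snoc_last]
          apply Fin.ext
          try dsimp only
          omega
      · -- right inverse
        intro a ha
        funext j
        apply Fin.ext
        simp only [Fin.snoc_castSucc]
        try dsimp only
        have := (a j).isLt
        omega
      · -- weights
        intro a ha
        simp only [Finset.mem_filter, Finset.mem_univ, true_and] at ha
        obtain ⟨hex, hadm⟩ := ha
        have hmono : ∀ j j' : Fin (k'+1), j < j' → (a j : ℕ) < (a j' : ℕ) := hadm.1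
        have hb : ∀ j, 1 ≤ (a j : ℕ) ∧ (a j : ℕ) ≤ n+1 := hadm.2.1
        obtain ⟨hlast, hble⟩ := hkey a hex hmono hb
        have hmin : ∀ j : Fin k', min (a j.castSucc : ℕ) n = (a j.castSucc : ℕ) :=
          fun j => min_eq_left (hble j)
        try dsimp only
        rw [Fin.prod_univ_castSucc,
          hat_top ε (fun j => (a j : ℕ)) hlast hble, hlast]
        simp only [hmin]
        ring
    · rw [if_neg (by tauto)]
      apply Finset.sum_eq_zero
      intro i _
      by_cases hex : ∃ j, (i j : ℕ) = n+1
      · rw [if_pos hex, if_neg ?_]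
        rintro ⟨hmono', hb', hp'⟩
        have hmono : ∀ j j' : Fin (k'+1), j < j' → (i j : ℕ) < (i j' : ℕ) := hmono'
        have hb : ∀ j, 1 ≤ (i j : ℕ) ∧ (i j : ℕ) ≤ n+1 := hb'
        have hp : ∀ j : Fin (k'+1), (i j : ℕ) % 2 = (j.val + s) % 2 := hp'
        obtain ⟨hlast, -⟩ := hkey i hex hmono hb
        have hplast := hp (Fin.last k')
        rw [hlast, Fin.val_last] at hplast
        omega
      · rw [if_neg hex]
  · -- part B : tuples not containing n+1
    have hB : ∀ i : Fin k → Fin (n+2),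
        (if ¬(∃ j, (i j : ℕ) = n+1) then
            (if Adm (n+1) k s (fun j => (i j : ℕ))
              then (∏ j, (ε (i j : ℕ) : ℂ)) * M ^ hatAltSum (n+1) ε (fun j => (i j : ℕ))
              else 0) else 0)
        = (if Adm n k s (fun j => (i j : ℕ))
            then M ^ ((-1:ℤ)^(n+1+k) * ε (n+1))
              * ((∏ j, (ε (i j : ℕ) : ℂ)) * M ^ hatAltSum n ε (fun j => (i j : ℕ)))
            else 0) := by
      intro i
      by_cases hA : Adm n k s (fun j => (i j : ℕ))
      · have hkn : k ≤ n := Adm_le hA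
        obtain ⟨hmono, hb, hp⟩ := hA
        have hnotex : ¬(∃ j, (i j : ℕ) = n+1) := by
          rintro ⟨j, hj⟩
          have := (hb j).2
          dsimp only at this
          omega
        rw [if_pos hnotex,
          if_pos (show Adm (n+1) k s (fun j => (i j : ℕ)) from
            ⟨hmono, fun j => ⟨(hb j).1, by have := (hb j).2; omega⟩, hp⟩),
          if_pos (show Adm n k s (fun j => (i j : ℕ)) from ⟨hmono, hb, hp⟩)]
        rw [hat_no_top ε (fun j => (i j : ℕ)) hmono hb, zpow_add₀ hM,
          show ((-1:ℤ))^(n+1-k) = ((-1:ℤ))^(n+1+k) from by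
            rw [show n+1+k = (n+1-k)+2*k by omega, pow_add, pow_mul]; norm_num]
        ring
      · rw [if_neg hA]
        by_cases hne : ∃ j, (i j : ℕ) = n+1
        · rw [if_neg (not_not_intro hne)]
        · rw [if_pos hne, if_neg ?_]
          rintro ⟨hmono, hb, hp⟩
          exact hA ⟨hmono, fun j => ⟨(hb j).1, by
            have h2 := (hb j).2
            have h3 : (i j : ℕ) ≠ n+1 := fun hh => hne ⟨j, hh⟩
            dsimp only at h2 h3 ⊢
            omega⟩, hp⟩
    rw [Finset.sum_congr rfl (fun i _ => hB i), Ssum, Finset.mul_sum,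
      Finset.sum_congr rfl (fun (i' : Fin k → Fin (n+1)) (_ : i' ∈ Finset.univ) => by
        rw [mul_ite, mul_zero]),
      ← Finset.sum_filter, ← Finset.sum_filter]
    apply Finset.sum_nbij'
      (i := fun (i : Fin k → Fin (n+2)) (j : Fin k) =>
        (⟨min (i j : ℕ) n, by omega⟩ : Fin (n+1)))
      (j := fun (i' : Fin k → Fin (n+1)) (j : Fin k) =>
        (⟨(i' j : ℕ), by have := (i' j).isLt; omega⟩ : Fin (n+2)))
    · intro a ha
      simp only [Finset.mem_filter, Finset.mem_univ, true_and] at ha ⊢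
      have hmono : ∀ j j' : Fin k, j < j' → (a j : ℕ) < (a j' : ℕ) := ha.1
      have hb : ∀ j, 1 ≤ (a j : ℕ) ∧ (a j : ℕ) ≤ n := ha.2.1
      have hp : ∀ j : Fin k, (a j : ℕ) % 2 = (j.val + s) % 2 := ha.2.2
      refine ⟨fun j j' hjj => ?_, fun j => ?_, fun j => ?_⟩ <;> dsimp only
      · rw [min_eq_left (hb j).2, min_eq_left (hb j').2]
        exact hmono j j' hjj
      · rw [min_eq_left (hb j).2]
        exact hb j
      · rw [min_eq_left (hb j).2]
        exact hp j
    · intro a ha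
      simp only [Finset.mem_filter, Finset.mem_univ, true_and] at ha ⊢
      have hmono : ∀ j j' : Fin k, j < j' → (a j : ℕ) < (a j' : ℕ) := ha.1
      have hb : ∀ j, 1 ≤ (a j : ℕ) ∧ (a j : ℕ) ≤ n := ha.2.1
      have hp : ∀ j : Fin k, (a j : ℕ) % 2 = (j.val + s) % 2 := ha.2.2
      refine ⟨fun j j' hjj => ?_, fun j => ?_, fun j => ?_⟩ <;> dsimp only
      · exact hmono j j' hjj
      · exact ⟨(hb j).1, by have := (hb j).2; omega⟩
      · exact hp j
    · intro a ha
      simp only [Finset.mem_filter, Finset.mem_univ, true_and] at ha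
      have hb : ∀ j, 1 ≤ (a j : ℕ) ∧ (a j : ℕ) ≤ n := ha.2.1
      funext j
      apply Fin.ext
      try dsimp only
      have := (hb j).2
      omega
    · intro a ha
      funext j
      apply Fin.ext
      try dsimp only
      have := (a j).isLt
      omega
    · intro a ha
      simp only [Finset.mem_filter, Finset.mem_univ, true_and] at ha
      have hb : ∀ j, 1 ≤ (a j : ℕ) ∧ (a j : ℕ) ≤ n := ha.2.1
      have hmin : ∀ j : Fin k, min (a j : ℕ) n = (a j : ℕ) :=
        fun j => min_eq_left (hb j).2
      try dsimp only
      simp only [hmin]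

noncomputable def Agen (n s p : ℕ) (ε : ℕ → ℤ) (M lamT : ℂ) : ℂ :=
  ∑ k ∈ Finset.range (n+1), Ssum n (2*k+p) s ε M * lamT ^ k

lemma Agen_zero0 (s : ℕ) (ε : ℕ → ℤ) (M lamT : ℂ) : Agen 0 s 0 ε M lamT = 1 := by
  simp [Agen, Ssum_base]

lemma Agen_zero1 (s : ℕ) (ε : ℕ → ℤ) (M lamT : ℂ) : Agen 0 s 1 ε M lamT = 0 := by
  simp [Agen, Ssum_vanish (n := 0) (k := 1) s ε M one_pos]

lemma Agen_succ0 (n s : ℕ) (ε : ℕ → ℤ) (M lamT : ℂ) (hM : M ≠ 0) :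
    Agen (n+1) s 0 ε M lamT =
      (if n % 2 = s % 2 then (ε (n+1) : ℂ) * lamT * Agen n s 1 ε M lamT else 0)
      + M ^ ((-1 : ℤ)^(n+1) * ε (n+1)) * Agen n s 0 ε M lamT := by
  have key : ∀ k ∈ Finset.range (n+1+1),
      Ssum (n+1) (2*k+0) s ε M * lamT ^ k
      = (if 1 ≤ k ∧ n % 2 = s % 2 then (ε (n+1) : ℂ) * Ssum n (2*k-1) s ε M * lamT ^ k else 0)
        + M ^ ((-1:ℤ)^(n+1) * ε (n+1)) * Ssum n (2*k) s ε M * lamT ^ k := by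
    intro k _
    rw [show 2*k+0 = 2*k from rfl, Ssum_succ n (2*k) s ε M hM,
      show ((-1:ℤ))^(n+1+2*k) = ((-1:ℤ))^(n+1) by rw [pow_add, pow_mul]; norm_num]
    rcases Nat.eq_zero_or_pos k with hk | hk
    · subst hk
      rw [if_neg (by omega), if_neg (by omega)]
      ring
    · by_cases hc : n % 2 = s % 2
      · rw [if_pos (by omega : 1 ≤ 2*k ∧ (n+1) % 2 = (2*k-1+s) % 2), if_pos ⟨hk, hc⟩]
        ring
      · rw [if_neg (by omega : ¬(1 ≤ 2*k ∧ (n+1) % 2 = (2*k-1+s) % 2)), if_neg (by tauto)]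
        ring
  rw [Agen, Finset.sum_congr rfl key, Finset.sum_add_distrib]
  congr 1
  · by_cases hc : n % 2 = s % 2
    · rw [if_pos hc]
      rw [Finset.sum_congr rfl (fun k (_ : k ∈ Finset.range (n+1+1)) =>
          (show (if 1 ≤ k ∧ n % 2 = s % 2 then (ε (n+1):ℂ) * Ssum n (2*k-1) s ε M * lamT ^ k else 0)
              = (if 1 ≤ k then (ε (n+1):ℂ) * Ssum n (2*k-1) s ε M * lamT ^ k else 0) by
            by_cases hk : 1 ≤ k
            · rw [if_pos ⟨hk, hc⟩, if_pos hk]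
            · rw [if_neg (by tauto), if_neg hk]))]
      rw [Finset.sum_range_succ' _ (n+1), if_neg (by omega : ¬ (1:ℕ) ≤ 0), add_zero]
      rw [Agen, Finset.mul_sum]
      apply Finset.sum_congr rfl
      intro k _
      rw [if_pos (by omega : (1:ℕ) ≤ k+1), show 2*(k+1)-1 = 2*k+1 by omega]
      ring
    · rw [if_neg hc]
      apply Finset.sum_eq_zero
      intro k _
      rw [if_neg (by tauto)]
  · rw [Finset.sum_range_succ, Ssum_vanish s ε M (by omega),
      show M ^ ((-1:ℤ)^(n+1) * ε (n+1)) * (0:ℂ) * lamT ^ (n+1) = 0 by ring, add_zero,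
      Agen, Finset.mul_sum]
    apply Finset.sum_congr rfl
    intro k _
    rw [show 2*k+0 = 2*k from rfl]
    ring

lemma Agen_succ1 (n s : ℕ) (ε : ℕ → ℤ) (M lamT : ℂ) (hM : M ≠ 0) :
    Agen (n+1) s 1 ε M lamT =
      (if (n+1) % 2 = s % 2 then (ε (n+1) : ℂ) * Agen n s 0 ε M lamT else 0)
      + M ^ ((-1 : ℤ)^n * ε (n+1)) * Agen n s 1 ε M lamT := by
  have key : ∀ k ∈ Finset.range (n+1+1),
      Ssum (n+1) (2*k+1) s ε M * lamT ^ k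
      = (if (n+1) % 2 = s % 2 then (ε (n+1):ℂ) * Ssum n (2*k) s ε M * lamT ^ k else 0)
        + M ^ ((-1:ℤ)^n * ε (n+1)) * Ssum n (2*k+1) s ε M * lamT ^ k := by
    intro k _
    rw [Ssum_succ n (2*k+1) s ε M hM,
      show ((-1:ℤ))^(n+1+(2*k+1)) = ((-1:ℤ))^n by
        rw [show n+1+(2*k+1) = n+2*(k+1) by ring, pow_add, pow_mul]; norm_num,
      show 2*k+1-1 = 2*k by omega]
    by_cases hc : (n+1) % 2 = s % 2
    · rw [if_pos (by omega : 1 ≤ 2*k+1 ∧ (n+1) % 2 = (2*k+s) % 2), if_pos hc]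
      ring
    · rw [if_neg (by omega : ¬(1 ≤ 2*k+1 ∧ (n+1) % 2 = (2*k+s) % 2)), if_neg hc]
      ring
  rw [Agen, Finset.sum_congr rfl key, Finset.sum_add_distrib]
  congr 1
  · by_cases hc : (n+1) % 2 = s % 2
    · rw [if_pos hc, Finset.sum_congr rfl (fun k (_ : k ∈ Finset.range (n+1+1)) => if_pos hc),
        Finset.sum_range_succ, Ssum_vanish s ε M (by omega),
        show (ε (n+1):ℂ) * 0 * lamT ^ (n+1) = 0 by ring, add_zero, Agen, Finset.mul_sum]
      apply Finset.sum_congr rfl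
      intro k _
      rw [show 2*k+0 = 2*k from rfl]
      ring
    · rw [if_neg hc, Finset.sum_congr rfl (fun k (_ : k ∈ Finset.range (n+1+1)) => if_neg hc),
        Finset.sum_const_zero]
  · rw [Finset.sum_range_succ, Ssum_vanish s ε M (by omega),
      show M ^ ((-1:ℤ)^n * ε (n+1)) * (0:ℂ) * lamT ^ (n+1) = 0 by ring, add_zero,
      Agen, Finset.mul_sum]
    apply Finset.sum_congr rfl
    intro k _
    ring

lemma Agen_left (lamT : ℂ) (n : ℕ) : ∀ (ε : ℕ → ℤ) (M : ℂ), M ≠ 0 →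
    (Agen (n+1) 1 0 ε M lamT = (ε 1 : ℂ) * lamT * Agen n 1 1 (fun t => ε (t+1)) M lamT
        + M ^ (-(ε 1)) * Agen n 0 0 (fun t => ε (t+1)) M⁻¹ lamT)
    ∧ (Agen (n+1) 1 1 ε M lamT = (ε 1 : ℂ) * Agen n 1 0 (fun t => ε (t+1)) M lamT
        + M ^ (-(ε 1)) * Agen n 0 1 (fun t => ε (t+1)) M⁻¹ lamT)
    ∧ (Agen (n+1) 0 0 ε M lamT = M ^ (-(ε 1)) * Agen n 1 0 (fun t => ε (t+1)) M⁻¹ lamT)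
    ∧ (Agen (n+1) 0 1 ε M lamT = M ^ (-(ε 1)) * Agen n 1 1 (fun t => ε (t+1)) M⁻¹ lamT) := by
  induction n with
  | zero =>
    intro ε M hM
    refine ⟨?_, ?_, ?_, ?_⟩
    · rw [Agen_succ0 0 1 ε M lamT hM]
      simp [Agen_zero0, Agen_zero1]
    · rw [Agen_succ1 0 1 ε M lamT hM]
      simp [Agen_zero0, Agen_zero1]
    · rw [Agen_succ0 0 0 ε M lamT hM]
      simp [Agen_zero0, Agen_zero1]
    · rw [Agen_succ1 0 0 ε M lamT hM]
      simp [Agen_zero0, Agen_zero1]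
  | succ n ih =>
    intro ε M hM
    have hMi : M⁻¹ ≠ 0 := inv_ne_zero hM
    obtain ⟨ih1, ih2, ih3, ih4⟩ := ih ε M hM
    rcases Nat.even_or_odd n with hpar | hpar
    · have hn : n % 2 = 0 := Nat.even_iff.mp hpar
      have p0 : ((-1:ℤ))^n = 1 := hpar.neg_one_pow
      have p1 : ((-1:ℤ))^(n+1) = -1 := (Even.add_one hpar).neg_one_pow
      have p2 : ((-1:ℤ))^(n+1+1) = 1 := (Odd.add_one (Even.add_one hpar)).neg_one_pow
      refine ⟨?_, ?_, ?_, ?_⟩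
      · rw [Agen_succ0 (n+1) 1 ε M lamT hM, if_pos (by omega), ih1, ih2,
          Agen_succ1 n 1 (fun t => ε (t+1)) M lamT hM, if_pos (by omega),
          Agen_succ0 n 0 (fun t => ε (t+1)) M⁻¹ lamT hMi, if_pos (by omega)]
        simp only [inv_zpow', p0, p1, p2, one_mul, neg_one_mul, neg_neg]
        ring
      · rw [Agen_succ1 (n+1) 1 ε M lamT hM, if_neg (by omega), ih2,
          Agen_succ0 n 1 (fun t => ε (t+1)) M lamT hM, if_neg (by omega),
          Agen_succ1 n 0 (fun t => ε (t+1)) M⁻¹ lamT hMi, if_neg (by omega)]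
        simp only [inv_zpow', p0, p1, p2, one_mul, neg_one_mul, neg_neg, zero_add]
        ring
      · rw [Agen_succ0 (n+1) 0 ε M lamT hM, if_neg (by omega), ih3,
          Agen_succ0 n 1 (fun t => ε (t+1)) M⁻¹ lamT hMi, if_neg (by omega)]
        simp only [inv_zpow', p0, p1, p2, one_mul, neg_one_mul, neg_neg, zero_add, inv_inv]
        ring
      · rw [Agen_succ1 (n+1) 0 ε M lamT hM, if_pos (by omega), ih3, ih4,
          Agen_succ1 n 1 (fun t => ε (t+1)) M⁻¹ lamT hMi, if_pos (by omega)]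
        simp only [inv_zpow', p0, p1, p2, one_mul, neg_one_mul, neg_neg, inv_inv]
        ring
    · have hn : n % 2 = 1 := Nat.odd_iff.mp hpar
      have p0 : ((-1:ℤ))^n = -1 := hpar.neg_one_pow
      have p1 : ((-1:ℤ))^(n+1) = 1 := (Odd.add_one hpar).neg_one_pow
      have p2 : ((-1:ℤ))^(n+1+1) = -1 := (Even.add_one (Odd.add_one hpar)).neg_one_pow
      refine ⟨?_, ?_, ?_, ?_⟩
      · rw [Agen_succ0 (n+1) 1 ε M lamT hM, if_neg (by omega), ih1,
          Agen_succ1 n 1 (fun t => ε (t+1)) M lamT hM, if_neg (by omega),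
          Agen_succ0 n 0 (fun t => ε (t+1)) M⁻¹ lamT hMi, if_neg (by omega)]
        simp only [inv_zpow', p0, p1, p2, one_mul, neg_one_mul, neg_neg, zero_add]
        ring
      · rw [Agen_succ1 (n+1) 1 ε M lamT hM, if_pos (by omega), ih1, ih2,
          Agen_succ0 n 1 (fun t => ε (t+1)) M lamT hM, if_pos (by omega),
          Agen_succ1 n 0 (fun t => ε (t+1)) M⁻¹ lamT hMi, if_pos (by omega)]
        simp only [inv_zpow', p0, p1, p2, one_mul, neg_one_mul, neg_neg, inv_inv]
        ring
      · rw [Agen_succ0 (n+1) 0 ε M lamT hM, if_pos (by omega), ih3, ih4,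
          Agen_succ0 n 1 (fun t => ε (t+1)) M⁻¹ lamT hMi, if_pos (by omega)]
        simp only [inv_zpow', p0, p1, p2, one_mul, neg_one_mul, neg_neg, inv_inv]
        ring
      · rw [Agen_succ1 (n+1) 0 ε M lamT hM, if_neg (by omega), ih4,
          Agen_succ1 n 1 (fun t => ε (t+1)) M⁻¹ lamT hMi, if_neg (by omega)]
        simp only [inv_zpow', p0, p1, p2, one_mul, neg_one_mul, neg_neg, zero_add, inv_inv]
        ring

lemma eseq_shift (e : ℕ → ℤ) (n : ℕ) : (fun t => eseq e (n+1) (t+1)) = eseq e n := by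
  funext t
  simp only [eseq]
  rcases Nat.lt_or_ge t (n+1) with h | h
  · rw [if_pos (by omega), if_pos (by omega)]
    congr 1; omega
  · rw [if_neg (by omega), if_neg (by omega)]
    congr 1; omega

lemma eseq_one (e : ℕ → ℤ) (n : ℕ) : eseq e (n+1) 1 = e (n+1) := by
  simp only [eseq, if_pos (by omega : (1:ℕ) ≤ n+1)]; congr 1

lemma eseq_last (e : ℕ → ℤ) (n : ℕ) : eseq e (n+1) (2*n+2) = e (n+1) := by
  simp only [eseq]; rw [if_neg (by omega)]; congr 1; omega

/-- `PF e lamT s p n M = Agen (2n) s p (eseq e n) M lamT`. -/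
noncomputable def PF (e : ℕ → ℤ) (lamT : ℂ) (s p n : ℕ) (M : ℂ) : ℂ :=
  Agen (2*n) s p (eseq e n) M lamT

section Rec
variable (e : ℕ → ℤ) (lamT : ℂ)

lemma fpoly_eq (M : ℂ) (n : ℕ) : fpoly e M lamT n = PF e lamT 1 0 n M := by
  rw [fpoly, PF, Agen]
  rw [Finset.sum_subset (Finset.range_subset_range.mpr (by omega : n+1 ≤ 2*n+1))]
  · apply Finset.sum_congr rfl
    intro k _
    rw [cT_eq]
    norm_num
  · intro k hk hk2
    simp only [Finset.mem_range] at hk hk2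
    rw [cT_eq, Ssum_vanish _ _ _ (by omega), zero_mul]

lemma gpoly_eq (M : ℂ) (n : ℕ) : gpoly e M lamT n = PF e lamT 1 1 n M := by
  rw [gpoly, PF, Agen]
  rw [Finset.sum_subset (Finset.range_subset_range.mpr (by omega : n ≤ 2*n+1))]
  · apply Finset.sum_congr rfl
    intro k _
    rw [cT_eq]
  · intro k hk hk2
    simp only [Finset.mem_range] at hk hk2
    rw [cT_eq, Ssum_vanish _ _ _ (by omega), zero_mul]

lemma PF_zero (s p : ℕ) (M : ℂ) :
    PF e lamT s 0 0 M = 1 ∧ PF e lamT s 1 0 M = 0 := by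
  constructor
  · exact Agen_zero0 s _ M lamT
  · exact Agen_zero1 s _ M lamT

lemma R1 (n : ℕ) (M : ℂ) (hM : M ≠ 0) :
    PF e lamT 1 0 (n+1) M =
      (e (n+1) : ℂ) * lamT * ((e (n+1) : ℂ) * PF e lamT 1 0 n M
          + M ^ (-(e (n+1))) * PF e lamT 0 1 n M⁻¹)
      + M ^ (e (n+1)) * ((e (n+1) : ℂ) * lamT * PF e lamT 1 1 n M
          + M ^ (-(e (n+1))) * PF e lamT 0 0 n M⁻¹) := by
  have hL := Agen_left lamT (2*n) (eseq e (n+1)) M hM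
  rw [eseq_shift, eseq_one] at hL
  rw [PF, show 2*(n+1) = (2*n+1)+1 by ring, Agen_succ0 _ _ _ _ _ hM,
    if_pos (by omega : (2*n+1) % 2 = 1 % 2),
    show (2*n+1)+1 = 2*n+2 from rfl, eseq_last,
    show ((-1:ℤ))^(2*n+2) = 1 from Even.neg_one_pow ⟨n+1, by ring⟩, one_mul,
    hL.1, hL.2.1]
  rfl

lemma R2 (n : ℕ) (M : ℂ) (hM : M ≠ 0) :
    PF e lamT 1 1 (n+1) M =
      M ^ (-(e (n+1))) * ((e (n+1) : ℂ) * PF e lamT 1 0 n M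
          + M ^ (-(e (n+1))) * PF e lamT 0 1 n M⁻¹) := by
  have hL := Agen_left lamT (2*n) (eseq e (n+1)) M hM
  rw [eseq_shift, eseq_one] at hL
  rw [PF, show 2*(n+1) = (2*n+1)+1 by ring, Agen_succ1 _ _ _ _ _ hM,
    if_neg (by omega : ¬ ((2*n+1)+1) % 2 = 1 % 2),
    show (2*n+1)+1 = 2*n+2 from rfl, eseq_last,
    show ((-1:ℤ))^(2*n+1) = -1 from Odd.neg_one_pow ⟨n, by ring⟩, neg_one_mul,
    hL.2.1, zero_add]
  rfl

lemma R3 (n : ℕ) (M : ℂ) (hM : M ≠ 0) :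
    PF e lamT 0 0 (n+1) M = PF e lamT 1 0 n M⁻¹ := by
  have hL := Agen_left lamT (2*n) (eseq e (n+1)) M hM
  rw [eseq_shift, eseq_one] at hL
  rw [PF, show 2*(n+1) = (2*n+1)+1 by ring, Agen_succ0 _ _ _ _ _ hM,
    if_neg (by omega : ¬ (2*n+1) % 2 = 0 % 2),
    show (2*n+1)+1 = 2*n+2 from rfl, eseq_last,
    show ((-1:ℤ))^(2*n+2) = 1 from Even.neg_one_pow ⟨n+1, by ring⟩, one_mul,
    hL.2.2.1, zero_add, ← mul_assoc, ← zpow_add₀ hM, add_neg_cancel, zpow_zero, one_mul]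
  rfl

lemma R4 (n : ℕ) (M : ℂ) (hM : M ≠ 0) :
    PF e lamT 0 1 (n+1) M =
      (e (n+1) : ℂ) * (M ^ (-(e (n+1))) * PF e lamT 1 0 n M⁻¹)
      + M ^ (-(e (n+1))) * (M ^ (-(e (n+1))) * PF e lamT 1 1 n M⁻¹) := by
  have hL := Agen_left lamT (2*n) (eseq e (n+1)) M hM
  rw [eseq_shift, eseq_one] at hL
  rw [PF, show 2*(n+1) = (2*n+1)+1 by ring, Agen_succ1 _ _ _ _ _ hM,
    if_pos (by omega : ((2*n+1)+1) % 2 = 0 % 2),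
    show (2*n+1)+1 = 2*n+2 from rfl, eseq_last,
    show ((-1:ℤ))^(2*n+1) = -1 from Odd.neg_one_pow ⟨n, by ring⟩, neg_one_mul,
    hL.2.2.1, hL.2.2.2]
  rfl

lemma Inv : ∀ n : ℕ, ∀ M : ℂ, M ≠ 0 →
    (PF e lamT 1 0 n M = PF e lamT 1 0 n M⁻¹)
    ∧ (PF e lamT 0 1 n M = PF e lamT 1 1 n M)
    ∧ (PF e lamT 0 0 n M = PF e lamT 0 0 n M⁻¹) := by
  intro n
  induction n with
  | zero =>
    intro M hM
    refine ⟨?_, ?_, ?_⟩ <;> simp [PF, Agen_zero0, Agen_zero1]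
  | succ n ih =>
    intro M hM
    have hMi : M⁻¹ ≠ 0 := inv_ne_zero hM
    obtain ⟨ih1, ih2, ih3⟩ := ih M hM
    obtain ⟨ih1', ih2', ih3'⟩ := ih M⁻¹ hMi
    rw [inv_inv] at ih1' ih3'
    refine ⟨?_, ?_, ?_⟩
    · rw [R1 e lamT n M hM, R1 e lamT n M⁻¹ hMi, inv_inv]
      simp only [inv_zpow', neg_neg]
      rw [ih2', ih2, ih3, ih1]
      ring
    · rw [R4 e lamT n M hM, R2 e lamT n M hM, ih2', ← ih1]
      ring
    · rw [R3 e lamT n M hM, R3 e lamT n M⁻¹ hMi, inv_inv]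
      exact ih1.symm

lemma Klem (he : ∀ i, 1 ≤ i → e i = 1 ∨ e i = -1) : ∀ n : ℕ, ∀ M : ℂ, M ≠ 0 →
    lamT * M * (PF e lamT 1 1 (n+1) M - PF e lamT 1 1 (n+1) M⁻¹) =
      (M^2 - 1) * (PF e lamT 1 0 n M - PF e lamT 1 0 (n+1) M) := by
  intro n
  induction n with
  | zero =>
    intro M hM
    have he1 := he 1 le_rfl
    have hMi : M⁻¹ ≠ 0 := inv_ne_zero hM
    rw [R2 e lamT 0 M hM, R2 e lamT 0 M⁻¹ hMi, R1 e lamT 0 M hM, inv_inv]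
    simp only [inv_zpow', neg_neg]
    rw [(PF_zero e lamT 1 0 M).1, (PF_zero e lamT 1 0 M).2, (PF_zero e lamT 0 0 M⁻¹).1,
      (PF_zero e lamT 0 0 M⁻¹).2, (PF_zero e lamT 1 0 M⁻¹).1, (PF_zero e lamT 0 0 M).2]
    rcases he1 with h | h <;>
      rw [h] <;> push_cast <;>
      simp only [zpow_one, zpow_neg, zpow_one, neg_neg] <;>
      field_simp <;> ring
  | succ n ih =>
    intro M hM
    have he2 := he (n+2) (by omega)
    have hMi : M⁻¹ ≠ 0 := inv_ne_zero hM
    obtain ⟨H1, J1, -⟩ := Inv e lamT (n+1) M hM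
    obtain ⟨-, J1', -⟩ := Inv e lamT (n+1) M⁻¹ hMi
    have hK := ih M hM
    rw [R2 e lamT (n+1) M hM, R2 e lamT (n+1) M⁻¹ hMi, inv_inv,
      R1 e lamT (n+1) M hM, R3 e lamT n M⁻¹ hMi, inv_inv]
    simp only [inv_zpow', neg_neg]
    rw [J1', J1, ← H1]
    set F1 := PF e lamT 1 0 (n+1) M with hF1
    set G := PF e lamT 1 1 (n+1) M with hG
    set Gb := PF e lamT 1 1 (n+1) M⁻¹ with hGb
    set F0 := PF e lamT 1 0 n M with hF0
    clear_value F1 G Gb F0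
    rcases he2 with h | h <;>
      rw [show n+1+1 = n+2 from rfl, h] <;> push_cast <;>
      simp only [zpow_one, zpow_neg, zpow_one, neg_neg] <;>
      field_simp <;>
      linear_combination (-M) * hK

lemma stmt2 (M : ℂ) (hM : M ≠ 0) (n : ℕ) :
    gpoly e M lamT (n+1) =
      (e (n+1) : ℂ) * M ^ (-(e (n+1))) * fpoly e M lamT n +
        M ^ (-(2 * e (n+1))) * gpoly e M⁻¹ lamT n := by
  have hMi : M⁻¹ ≠ 0 := inv_ne_zero hM
  rw [gpoly_eq e lamT M (n+1), gpoly_eq e lamT M⁻¹ n, fpoly_eq e lamT M n,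
    R2 e lamT n M hM, (Inv e lamT n M⁻¹ hMi).2.1,
    show M ^ (-(2 * e (n+1))) = M ^ (-(e (n+1))) * M ^ (-(e (n+1))) from by
      rw [← zpow_add₀ hM]; congr 1; ring]
  ring

lemma stmt1 (he : ∀ i, 1 ≤ i → e i = 1 ∨ e i = -1) (M : ℂ) (hM : M ≠ 0) (n : ℕ) :
    fpoly e M lamT (n+2) =
      M ^ (2 * e (n+2)) * fpoly e M lamT n +
        (lamT + 1 - M ^ (2 * e (n+2))) * fpoly e M lamT (n+1) +
          (e (n+2) : ℂ) * lamT * (M + M⁻¹) * gpoly e M⁻¹ lamT (n+1) := by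
  have hMi : M⁻¹ ≠ 0 := inv_ne_zero hM
  have hK := Klem e lamT he n M hM
  rw [fpoly_eq e lamT M (n+2), fpoly_eq e lamT M n, fpoly_eq e lamT M (n+1),
    gpoly_eq e lamT M⁻¹ (n+1), R1 e lamT (n+1) M hM,
    (Inv e lamT (n+1) M⁻¹ hMi).2.1, R3 e lamT n M⁻¹ hMi, inv_inv]
  set F1 := PF e lamT 1 0 (n+1) M with hF1
  set G := PF e lamT 1 1 (n+1) M with hG
  set Gb := PF e lamT 1 1 (n+1) M⁻¹ with hGb
  set F0 := PF e lamT 1 0 n M with hF0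
  clear_value F1 G Gb F0
  rcases he (n+2) (by omega) with h | h <;>
    rw [show n+1+1 = n+2 from rfl, h] <;> push_cast <;>
    simp only [mul_one, mul_neg_one, zpow_one, zpow_neg, zpow_ofNat, neg_neg] <;> field_simp
  · linear_combination M * hK
  · linear_combination (-1) * hK

lemma mu_shift (n i : ℕ) (hi1 : 1 ≤ i) (hin : i ≤ n) :
    ((-1:ℤ)^(n+1-i) * e i - 2 * ∑ j ∈ Finset.Icc i (n+1), (-1:ℤ)^(n+1-j) * e j)
    = -(2 * e (n+1)) + -(((-1:ℤ)^(n-i) * e i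
        - 2 * ∑ j ∈ Finset.Icc i n, (-1:ℤ)^(n-j) * e j)) := by
  rw [← Finset.insert_Icc_right_eq_Icc_add_one (by omega : i ≤ n+1), Finset.sum_insert (by simp),
    Nat.sub_self, pow_zero, one_mul,
    show ∑ j ∈ Finset.Icc i n, (-1:ℤ)^(n+1-j) * e j
      = ∑ j ∈ Finset.Icc i n, -((-1:ℤ)^(n-j) * e j) from
    Finset.sum_congr rfl (fun j hj => by
      simp only [Finset.mem_Icc] at hj
      rw [show n+1-j = (n-j)+1 by omega, pow_succ]
      ring),
    Finset.sum_neg_distrib, show n+1-i = (n-i)+1 by omega, pow_succ]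
  ring

lemma stmt3 : ∀ n : ℕ, ∀ M : ℂ, M ≠ 0 →
    gpoly e M lamT n =
      ∑ i ∈ Finset.Icc 1 n, (e i : ℂ) *
        M ^ ((-1:ℤ)^(n-i) * e i - 2 * ∑ j ∈ Finset.Icc i n, (-1:ℤ)^(n-j) * e j) *
          fpoly e M lamT (i-1) := by
  intro n
  induction n with
  | zero =>
    intro M hM
    simp [gpoly]
  | succ n ih =>
    intro M hM
    have hMi : M⁻¹ ≠ 0 := inv_ne_zero hM
    rw [stmt2 e lamT M hM n, ih M⁻¹ hMi,
      ← Finset.insert_Icc_right_eq_Icc_add_one (by omega : 1 ≤ n+1),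
      Finset.sum_insert (by simp), Finset.mul_sum]
    congr 1
    · rw [show ((-1:ℤ)^(n+1-(n+1)) * e (n+1)
          - 2 * ∑ j ∈ Finset.Icc (n+1) (n+1), (-1:ℤ)^(n+1-j) * e j)
          = -(e (n+1)) from by
        rw [Finset.Icc_self, Finset.sum_singleton, Nat.sub_self, pow_zero]
        ring,
        show n+1-1 = n from rfl]
    · apply Finset.sum_congr rfl
      intro i hi
      simp only [Finset.mem_Icc] at hi
      rw [fpoly_eq e lamT M⁻¹ (i-1), ← (Inv e lamT (i-1) M hM).1,
        ← fpoly_eq e lamT M (i-1), inv_zpow',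
        show ((-1:ℤ)^(n+1-i) * e i - 2 * ∑ j ∈ Finset.Icc i (n+1), (-1:ℤ)^(n+1-j) * e j)
          = -(2 * e (n+1)) + -(((-1:ℤ)^(n-i) * e i
            - 2 * ∑ j ∈ Finset.Icc i n, (-1:ℤ)^(n-j) * e j)) from
          mu_shift e n i hi.1 hi.2,
        zpow_add₀ hM]
      ring

end Rec
end FG

/-- recursive formulas for `f_n` and `g_n`.
With `ḡ_m(M,λ̃) = g_m(M⁻¹,λ̃)`:
for `n ≥ 2`, `f_n = M^{2e_n}·f_{n−2} + (λ̃ + 1 − M^{2e_n})·f_{n−1} + e_n·λ̃·(M + M⁻¹)·ḡ_{n−1}`;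
for `n ≥ 1`, `g_n = e_n·M^{−e_n}·f_{n−1} + M^{−2e_n}·ḡ_{n−1}`; and moreover
`g_n = Σ_{i=1}^{n} e_i·M^{μ_i}·f_{i−1}` where
`μ_i = (−1)^{n−i}·e_i − 2·Σ_{j=i}^{n} (−1)^{n−j}·e_j`. -/
theorem fg_recursion (M : ℂ) (hM0 : M ≠ 0) (hM1 : M ≠ 1) (hMneg1 : M ≠ -1)
    (lam : ℂ) (lamT : ℂ) (hlamT : lamT = lam + (M - M⁻¹) ^ 2)
    (e : ℕ → ℤ) (he : ∀ i, 1 ≤ i → e i = 1 ∨ e i = -1) :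
    (∀ n : ℕ, 2 ≤ n →
      fpoly e M lamT n =
        M ^ (2 * e n) * fpoly e M lamT (n - 2) +
          (lamT + 1 - M ^ (2 * e n)) * fpoly e M lamT (n - 1) +
            (e n : ℂ) * lamT * (M + M⁻¹) * gpoly e M⁻¹ lamT (n - 1)) ∧
    (∀ n : ℕ, 1 ≤ n →
      gpoly e M lamT n =
        (e n : ℂ) * M ^ (-e n) * fpoly e M lamT (n - 1) +
          M ^ (-(2 * e n)) * gpoly e M⁻¹ lamT (n - 1)) ∧
    (∀ n : ℕ,
      gpoly e M lamT n =
        ∑ i ∈ Finset.Icc 1 n,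
          (e i : ℂ) *
            M ^ ((-1 : ℤ) ^ (n - i) * e i - 2 * ∑ j ∈ Finset.Icc i n, (-1 : ℤ) ^ (n - j) * e j) *
              fpoly e M lamT (i - 1)) := by
  refine ⟨?_, ?_, ?_⟩
  · intro n hn
    obtain ⟨m, rfl⟩ : ∃ m, n = m + 2 := ⟨n - 2, by omega⟩
    rw [show m+2-2 = m from rfl, show m+2-1 = m+1 from rfl]
    exact FG.stmt1 e lamT he M hM0 m
  · intro n hn
    obtain ⟨m, rfl⟩ : ∃ m, n = m + 1 := ⟨n - 1, by omega⟩
    rw [show m+1-1 = m from rfl]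
    exact FG.stmt2 e lamT M hM0 m
  · intro n
    exact FG.stmt3 e lamT n M hM0
end
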